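/- arXiv:2512.12890 — 10 statements merged into one kernel-verified Lean document; each statement's English description precedes it below -/
import Mathlib

section
/- Let a, b, c, d ≥ 0 be integers with b + c = a + d, and let z, w be complex numbers with (1-w)(1-z) = 1 (i.e. w = z/(z-1)). Then (1/a!) dᵃ/dzᵃ (z^b (1-z)^c) = (-1)^{a+b} (1-w)^{a+1} · (1/a!) dᵃ/dwᵃ (w^b / (1-w)^{d+1}). -/
open scoped Nat
open Finset Polynomial Topology

/-!
Expanding `x ^ b = (1 - (1 - x)) ^ b` turns both `x ^ b * (1 - x) ^ c` and
`x ^ b / (1 - x) ^ (d + 1)` into combinations of powers `(1 - x) ^ m`, `m : ℤ`, whose iterated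
derivatives are falling factorials. Since `1 - w = (1 - z)⁻¹`, the monomials `(1 - x) ^ p` at `z`
and `(1 - x) ^ q` at `w` already satisfy the identity whenever `p + q + 1 = a` (upper negation
of the falling factorial), and `b + c = a + d` makes the `k`-th and `(b - k)`-th terms of the two
expansions pair up in exactly this way.
-/

theorem descPochhammer_eval_neg {R : Type*} [CommRing R] (r : R) (n : ℕ) :
    (descPochhammer R n).eval (-r) = (-1) ^ n * (descPochhammer R n).eval (r + n - 1) := by
  rw [descPochhammer_eval_eq_ascPochhammer, show -r - n + 1 = -(r + n - 1) by ring,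
    ascPochhammer_eval_neg_eq_descPochhammer]

section

variable {𝕜 : Type*} [NontriviallyNormedField 𝕜]

theorem iteratedDeriv_one_sub_zpow (m : ℤ) (n : ℕ) (x : 𝕜) :
    iteratedDeriv n (fun y => (1 - y) ^ m) x =
      (-1) ^ n * (descPochhammer 𝕜 n).eval (m : 𝕜) * (1 - x) ^ (m - n) := by
  rw [iteratedDeriv_comp_const_sub n (fun y => y ^ m), iteratedDeriv_eq_iterate, iter_deriv_zpow',
    descPochhammer_eval_eq_prod_range]
  exact (smul_eq_mul _ _).trans (mul_assoc _ _ _).symm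

theorem iteratedDeriv_one_sub_zpow_eq_of_add_eq {p q : ℤ} {n : ℕ} (hpq : p + q + 1 = n)
    {z w : 𝕜} (hzw : (1 - w) * (1 - z) = 1) :
    iteratedDeriv n (fun y => (1 - y) ^ p) z =
      (-1) ^ n * (1 - w) ^ (n + 1) * iteratedDeriv n (fun y => (1 - y) ^ q) w := by
  have hu : 1 - z ≠ 0 := right_ne_zero_of_mul_eq_one hzw
  have hpoch :
      (descPochhammer 𝕜 n).eval (q : 𝕜) = (-1) ^ n * (descPochhammer 𝕜 n).eval (p : 𝕜) := by
    have hpq' := congrArg (Int.cast : ℤ → 𝕜) hpq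
    push_cast at hpq'
    rw [show (q : 𝕜) = -((p : 𝕜) - n + 1) by linear_combination hpq', descPochhammer_eval_neg]
    ring_nf
  have hpow : (1 - w) ^ (n + 1) * (1 - w) ^ (q - n) = (1 - z) ^ (p - n) := by
    rw [eq_inv_of_mul_eq_one_left hzw, ← zpow_natCast, ← zpow_add₀ (inv_ne_zero hu), inv_zpow']
    congr 1
    omega
  have hsq : (-1 : 𝕜) ^ n * (-1) ^ n = 1 := by rw [← mul_pow]; simp
  rw [iteratedDeriv_one_sub_zpow, iteratedDeriv_one_sub_zpow, hpoch, ← hpow]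
  linear_combination
    -(-1 : 𝕜) ^ n * (descPochhammer 𝕜 n).eval (p : 𝕜) * (1 - w) ^ (n + 1) * (1 - w) ^ (q - n) * hsq

theorem pow_mul_one_sub_zpow_eq_sum (b : ℕ) (m : ℤ) {x : 𝕜} (hx : x ≠ 1) :
    x ^ b * (1 - x) ^ m =
      ∑ k ∈ range (b + 1), (-1) ^ k * (b.choose k : 𝕜) * (1 - x) ^ (m + k) := by
  have hx' : 1 - x ≠ 0 := sub_ne_zero.2 hx.symm
  rw [show x ^ b = (-(1 - x) + 1) ^ b by ring, add_pow, sum_mul]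
  refine sum_congr rfl fun k _ => ?_
  rw [zpow_add₀ hx', zpow_natCast, neg_pow]
  ring

theorem iteratedDeriv_pow_mul_one_sub_zpow [CompleteSpace 𝕜] (b : ℕ) (m : ℤ) (n : ℕ) {x : 𝕜}
    (hx : x ≠ 1) :
    iteratedDeriv n (fun y => y ^ b * (1 - y) ^ m) x =
      ∑ k ∈ range (b + 1), (-1) ^ k * (b.choose k : 𝕜) *
        iteratedDeriv n (fun y => (1 - y) ^ (m + k)) x := by
  have hsum : (fun y => y ^ b * (1 - y) ^ m) =ᶠ[𝓝 x]
      fun y => ∑ k ∈ range (b + 1), (-1) ^ k * (b.choose k : 𝕜) * (1 - y) ^ (m + k) :=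
    (eventually_ne_nhds hx).mono fun y hy => pow_mul_one_sub_zpow_eq_sum b m hy
  have hx' : 1 - x ≠ 0 := sub_ne_zero.2 hx.symm
  rw [hsum.iteratedDeriv_eq, iteratedDeriv_fun_sum]
  · exact sum_congr rfl fun k _ => iteratedDeriv_const_mul_field _ _
  · intro k _
    exact contDiffAt_const.mul ((analyticAt_const.sub analyticAt_id).zpow hx').contDiffAt

end

theorem legendre_rational_derivative_identity
    (a b c d : ℕ) (h : b + c = a + d) (z w : ℂ) (hzw : (1 - w) * (1 - z) = 1) :
    (1 / (a ! : ℂ)) * iteratedDeriv a (fun x : ℂ => x ^ b * (1 - x) ^ c) z =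
      (-1) ^ (a + b) * (1 - w) ^ (a + 1) *
        ((1 / (a ! : ℂ)) * iteratedDeriv a (fun x : ℂ => x ^ b / (1 - x) ^ (d + 1)) w) := by
  have hz : z ≠ 1 := by rintro rfl; simp at hzw
  have hw : w ≠ 1 := by rintro rfl; simp at hzw
  have hlhs : (fun x : ℂ => x ^ b * (1 - x) ^ c) = fun x => x ^ b * (1 - x) ^ (c : ℤ) := by
    simp only [zpow_natCast]
  have hrhs : (fun x : ℂ => x ^ b / (1 - x) ^ (d + 1)) =
      fun x => x ^ b * (1 - x) ^ (-(d + 1 : ℕ) : ℤ) := by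
    simp only [zpow_neg, zpow_natCast, div_eq_mul_inv]
  suffices iteratedDeriv a (fun x : ℂ => x ^ b * (1 - x) ^ (c : ℤ)) z = (-1) ^ (a + b) *
      (1 - w) ^ (a + 1) * iteratedDeriv a (fun x => x ^ b * (1 - x) ^ (-(d + 1 : ℕ) : ℤ)) w by
    rw [hlhs, hrhs, this]; ring
  rw [iteratedDeriv_pow_mul_one_sub_zpow b _ a hz, iteratedDeriv_pow_mul_one_sub_zpow b _ a hw,
    ← sum_range_reflect, mul_sum]
  refine sum_congr rfl fun k hk => ?_
  obtain ⟨j, rfl⟩ := Nat.exists_eq_add_of_le (Nat.lt_succ_iff.mp (mem_range.mp hk))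
  set D := iteratedDeriv a (fun y : ℂ => (1 - y) ^ (-(d + 1 : ℕ) + k : ℤ)) w
  have hsign : (-1 : ℂ) ^ j * (-1) ^ a = (-1) ^ (a + (k + j)) * (-1) ^ k := by
    rw [← pow_add, ← pow_add, show a + (k + j) + k = j + a + 2 * k by ring,
      pow_add _ (j + a), pow_mul, neg_one_sq, one_pow, mul_one]
  rw [show k + j + 1 - 1 - k = j by omega, ← Nat.choose_symm_add,
    iteratedDeriv_one_sub_zpow_eq_of_add_eq (q := -(d + 1 : ℕ) + k) (by push_cast; omega) hzw]
  linear_combination ((k + j).choose k * (1 - w) ^ (a + 1) * D) * hsign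
end

section
/- For any nonnegative integers j and k: C(k+j, j) · Σ_{i=1}^{j} 1/(k+i) = Σ_{i=1}^{j} C(k+j-i, j-i) · (1/i). -/
/-!
Both sides, viewed as arrays in `(j, k)`, satisfy Pascal's recurrence
`a (j+1) (k+1) = a j (k+1) + a (j+1) k` and agree on the boundary lines: at `j = 0` both vanish,
and at `k = 0` both equal the harmonic number `H_j`. For the left side, written as
`C(k+j, k) (H_{k+j} - H_k)`, the recurrence reduces to `(n+1) C(n, k) = (k+1) C(n+1, k+1)`;
for the right side it is Pascal's rule applied termwise.
-/

open Finset

theorem pascal_ext {α : Type*} [Add α] {f g : ℕ → ℕ → α}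
    (hf : ∀ j k, f (j + 1) (k + 1) = f j (k + 1) + f (j + 1) k)
    (hg : ∀ j k, g (j + 1) (k + 1) = g j (k + 1) + g (j + 1) k)
    (h_left : ∀ k, f 0 k = g 0 k) (h_right : ∀ j, f j 0 = g j 0) : f = g := by
  funext j
  induction j with
  | zero => exact funext h_left
  | succ j ihj =>
    funext k
    induction k with
    | zero => exact h_right _
    | succ k ihk => rw [hf, hg, ihj, ihk]

theorem harmonic_add_sub_harmonic (k j : ℕ) :
    harmonic (k + j) - harmonic k = ∑ i ∈ Icc 1 j, 1 / ((k : ℚ) + (i : ℚ)) := by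
  induction j with
  | zero => simp
  | succ j ih =>
    rw [sum_Icc_succ_top (Nat.le_add_left 1 j), ← ih, ← add_assoc, harmonic_succ]
    push_cast
    ring

/-- Both this and `hyperharmonicSum j k` are the hyperharmonic number `H_j^{(k+1)}`. -/
def hyperharmonicClosed (j k : ℕ) : ℚ :=
  (k + j).choose k * (harmonic (k + j) - harmonic k)

def hyperharmonicSum (j k : ℕ) : ℚ :=
  ∑ i ∈ Icc 1 j, ((k + j - i).choose k : ℚ) * (1 / (i : ℚ))

theorem hyperharmonicClosed_pascal (j k : ℕ) :
    hyperharmonicClosed (j + 1) (k + 1) =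
      hyperharmonicClosed j (k + 1) + hyperharmonicClosed (j + 1) k := by
  obtain ⟨n, hn⟩ : ∃ n, k + j + 1 = n := ⟨_, rfl⟩
  have h_absorb : ((n + 1).choose (k + 1) : ℚ) / (n + 1) = n.choose k / (k + 1) := by
    rw [div_eq_div_iff (by positivity) (by positivity)]
    exact_mod_cast (Nat.add_one_mul_choose_eq n k).symm.trans (mul_comm _ _)
  have h_pascal : ((n + 1).choose (k + 1) : ℚ) = n.choose k + n.choose (k + 1) := by
    exact_mod_cast Nat.choose_succ_succ' n k
  simp only [hyperharmonicClosed, show k + 1 + (j + 1) = n + 1 by omega,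
    show k + 1 + j = n by omega, show k + (j + 1) = n by omega, harmonic_succ]
  push_cast
  linear_combination h_absorb + (harmonic n - harmonic k - 1 / (k + 1)) * h_pascal

theorem hyperharmonicSum_pascal (j k : ℕ) :
    hyperharmonicSum (j + 1) (k + 1) =
      hyperharmonicSum j (k + 1) + hyperharmonicSum (j + 1) k := by
  have h_termwise : ∀ i ∈ Icc 1 (j + 1),
      ((k + 1 + (j + 1) - i).choose (k + 1) : ℚ) * (1 / (i : ℚ)) =
        ((k + (j + 1) - i).choose (k + 1) : ℚ) * (1 / (i : ℚ)) +
          ((k + (j + 1) - i).choose k : ℚ) * (1 / (i : ℚ)) := by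
    intro i hi
    rw [show k + 1 + (j + 1) - i = k + (j + 1) - i + 1 by grind, Nat.choose_succ_succ']
    push_cast
    ring
  have h_top : ∑ i ∈ Icc 1 (j + 1), ((k + (j + 1) - i).choose (k + 1) : ℚ) * (1 / (i : ℚ)) =
      hyperharmonicSum j (k + 1) := by
    rw [sum_Icc_succ_top (Nat.le_add_left 1 j), hyperharmonicSum]
    simp only [Nat.add_sub_cancel, Nat.choose_succ_self, Nat.cast_zero, zero_mul, add_zero]
    exact sum_congr rfl fun i _ => by rw [show k + (j + 1) - i = k + 1 + j - i by omega]
  rw [hyperharmonicSum, sum_congr rfl h_termwise, sum_add_distrib, h_top]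
  rfl

theorem hyperharmonicClosed_eq_hyperharmonicSum :
    hyperharmonicClosed = hyperharmonicSum := by
  refine pascal_ext hyperharmonicClosed_pascal hyperharmonicSum_pascal
    (fun k => by simp [hyperharmonicClosed, hyperharmonicSum]) (fun j => ?_)
  simp [hyperharmonicClosed, hyperharmonicSum, harmonic_eq_sum_Icc]

theorem hyperharmonic_binomial_identity (j k : ℕ) :
    ((k + j).choose j : ℚ) * ∑ i ∈ Finset.Icc 1 j, 1 / ((k : ℚ) + (i : ℚ)) =
      ∑ i ∈ Finset.Icc 1 j, ((k + j - i).choose (j - i) : ℚ) * (1 / (i : ℚ)) := by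
  have h := congrFun₂ hyperharmonicClosed_eq_hyperharmonicSum j k
  rw [hyperharmonicClosed, hyperharmonicSum, harmonic_add_sub_harmonic] at h
  rw [← Nat.choose_symm_add, h]
  refine sum_congr rfl fun i hi => ?_
  rw [Nat.choose_symm_of_eq_add (by grind : k + j - i = k + (j - i))]
end

section
/- Define hyperharmonic numbers by H_j^{(0)} = 1/j for j ≥ 1, and H_j^{(k+1)} = Σ_{i=1}^{j} H_i^{(k)}. Then for all k ≥ 0 and j ≥ 1: H_j^{(k+1)} = C(k+j, j) · (H_{k+j}^{(1)} - H_k^{(1)}), where H_m^{(1)} = Σ_{i=1}^{m} 1/i is the m-th harmonic number. -/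
/-- Hyperharmonic numbers: `hyperharmonic 0 j = 1/j` (for `j ≥ 1`) and
`hyperharmonic (k+1) j = ∑_{i=1}^j hyperharmonic k i`. -/
def hyperharmonic : ℕ → ℕ → ℚ
  | 0, j => 1 / (j : ℚ)
  | k + 1, j => ∑ i ∈ Finset.Icc 1 j, hyperharmonic k i

/-! Both sides obey the same Pascal-type recursion in `(k, j)`, with the same boundary values
`H_j^{(1)} = H_j` and `H_0^{(k+1)} = 0`. For the closed form the recursion reduces, after Pascal's
rule, to `C(n, j+1) (n+1) = C(n+1, j+1) (k+1)` for `n = k + j + 1`. -/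

lemma hyperharmonic_one (j : ℕ) : hyperharmonic 1 j = harmonic j := by
  simp [hyperharmonic, harmonic_eq_sum_Icc]

lemma hyperharmonic_succ_zero (k : ℕ) : hyperharmonic (k + 1) 0 = 0 := by
  simp [hyperharmonic]

lemma hyperharmonic_succ_succ (k j : ℕ) :
    hyperharmonic (k + 1) (j + 1) = hyperharmonic (k + 1) j + hyperharmonic k (j + 1) :=
  Finset.sum_Icc_succ_top (Nat.le_add_left 1 j) _

-- The claimed value of `hyperharmonic (k + 1) j` (note the shift in `k`).
def hyperharmonicClosedForm (k j : ℕ) : ℚ :=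
  (k + j).choose j * (harmonic (k + j) - harmonic k)

lemma hyperharmonicClosedForm_zero_left (j : ℕ) : hyperharmonicClosedForm 0 j = harmonic j := by
  simp [hyperharmonicClosedForm]

lemma hyperharmonicClosedForm_zero_right (k : ℕ) : hyperharmonicClosedForm k 0 = 0 := by
  simp [hyperharmonicClosedForm]

lemma hyperharmonicClosedForm_succ_succ (k j : ℕ) :
    hyperharmonicClosedForm (k + 1) (j + 1) =
      hyperharmonicClosedForm (k + 1) j + hyperharmonicClosedForm k (j + 1) := by
  have hkj : k + 1 + j = k + (j + 1) := by omega
  have hn : k + 1 + (j + 1) = k + (j + 1) + 1 := by omega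
  simp only [hyperharmonicClosedForm, hkj, hn, Nat.choose_succ_succ', harmonic_succ]
  set n := k + (j + 1)
  have key : (n.choose (j + 1) * (n + 1) : ℚ) = (n + 1).choose (j + 1) * (k + 1) := by
    have := Nat.choose_mul_succ_eq n (j + 1)
    rw [show n + 1 - (j + 1) = k + 1 by omega] at this
    exact_mod_cast this
  rw [Nat.choose_succ_succ'] at key
  push_cast at key ⊢
  field_simp
  linear_combination -key

theorem hyperharmonic_eq_choose_mul_harmonic_sub_general (k j : ℕ) :
    hyperharmonic (k + 1) j =
      ((k + j).choose j : ℚ) *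
        ((∑ i ∈ Finset.Icc 1 (k + j), 1 / (i : ℚ)) - ∑ i ∈ Finset.Icc 1 k, 1 / (i : ℚ)) := by
  simp only [one_div, ← harmonic_eq_sum_Icc]
  change hyperharmonic (k + 1) j = hyperharmonicClosedForm k j
  induction k generalizing j with
  | zero => rw [hyperharmonic_one, hyperharmonicClosedForm_zero_left]
  | succ k ihk =>
    induction j with
    | zero => rw [hyperharmonic_succ_zero, hyperharmonicClosedForm_zero_right]
    | succ j ihj => rw [hyperharmonic_succ_succ, ihj, ihk, hyperharmonicClosedForm_succ_succ]

theorem hyperharmonic_eq_choose_mul_harmonic_sub (k j : ℕ) (hj : 1 ≤ j) :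
    hyperharmonic (k + 1) j =
      ((k + j).choose j : ℚ) *
        ((∑ i ∈ Finset.Icc 1 (k + j), 1 / (i : ℚ)) - ∑ i ∈ Finset.Icc 1 k, 1 / (i : ℚ)) :=
  hyperharmonic_eq_choose_mul_harmonic_sub_general k j
end

section
/- With L_n defined as the multiple Legendre polynomials, L_2(p_1,q_1;p_2,q_2;z) = (-1)^{q_1} z^{q_2}(1-z)^{p_2} · (1/(p_2+q_2)!) d^{p_2+q_2}/dz^{p_2+q_2} [ z^{p_2+q_1}(1-z)^{p_1+q_2} ]. -/
open scoped Nat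

/-- Auxiliary recursion for multiple Legendre polynomials, peeling the
outermost (i.e. last) index pair from the head of the list. -/
noncomputable def LegAux : List (ℕ × ℕ) → ℂ → ℂ
  | [], _ => 1
  | (p, q) :: rest, z =>
      z ^ q * (1 - z) ^ p *
        ((1 / ((p + q)! : ℂ)) *
          iteratedDeriv (p + q) (fun x : ℂ => x ^ p * (1 - x) ^ q * LegAux rest x) z)

/-- The multiple Legendre polynomial `L_n(p_1,q_1;…;p_n,q_n;z)`, where the list
is `[(p_1,q_1),…,(p_n,q_n)]`: recursively, `L_0 = 1` and
`L_n = z^{q_n}(1-z)^{p_n} D_{p_n+q_n}(z^{p_n}(1-z)^{q_n} L_{n-1})`. -/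
noncomputable def Leg (L : List (ℕ × ℕ)) (z : ℂ) : ℂ := LegAux L.reverse z

/-!
`L_1(p,q;z) = (-1)^q z^q (1-z)^p`: the polynomial `x^p (1-x)^q` has degree `p+q` and
leading coefficient `(-1)^q`, so its `(p+q)`-th derivative is the constant `(p+q)! (-1)^q`.
Feeding this into the recursion, the inner factor of `L_2` is
`(-1)^q₁ x^(p₂+q₁) (1-x)^(p₁+q₂)`, and the constant `(-1)^q₁` comes out of the derivative.
-/

open Polynomial

namespace Polynomial

theorem iteratedDeriv_eval {𝕜 : Type*} [NontriviallyNormedField 𝕜] (P : 𝕜[X]) (n : ℕ) :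
    iteratedDeriv n (fun x => P.eval x) = fun x => (derivative^[n] P).eval x := by
  induction n generalizing P with
  | zero => rfl
  | succ n ih =>
    have hderiv : (deriv fun x => P.eval x) = fun x => (derivative P).eval x := by
      ext x
      exact P.deriv
    rw [iteratedDeriv_succ', Function.iterate_succ_apply, hderiv, ih]

theorem iterate_derivative_of_natDegree_le {R : Type*} [Semiring R] {P : R[X]} {n : ℕ}
    (h : P.natDegree ≤ n) : derivative^[n] P = C ((n ! : R) * P.coeff n) := by
  have hdeg : (derivative^[n] P).natDegree ≤ 0 := by
    have := natDegree_iterate_derivative P n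
    omega
  rw [eq_C_of_natDegree_le_zero hdeg, coeff_iterate_derivative, zero_add,
    Nat.descFactorial_self, nsmul_eq_mul]

variable {R : Type*} [CommRing R]

theorem natDegree_one_sub_X_le : ((1 : R[X]) - X).natDegree ≤ 1 := by
  compute_degree

theorem natDegree_one_sub_X_pow_le (q : ℕ) : (((1 : R[X]) - X) ^ q).natDegree ≤ q := by
  simpa only [mul_one] using natDegree_pow_le_of_le q natDegree_one_sub_X_le

theorem natDegree_X_pow_mul_one_sub_X_pow_le (p q : ℕ) :
    ((X : R[X]) ^ p * (1 - X) ^ q).natDegree ≤ p + q :=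
  natDegree_mul_le_of_le (natDegree_X_pow_le p) (natDegree_one_sub_X_pow_le q)

theorem coeff_X_pow_mul_one_sub_X_pow (p q : ℕ) :
    ((X : R[X]) ^ p * (1 - X) ^ q).coeff (p + q) = (-1) ^ q := by
  have hcoeff := coeff_pow_of_natDegree_le (m := q) (natDegree_one_sub_X_le (R := R))
  rw [mul_one] at hcoeff
  rw [coeff_mul_add_eq_of_natDegree_le (natDegree_X_pow_le p) (natDegree_one_sub_X_pow_le q),
    hcoeff, coeff_X_pow_self]
  simp [coeff_one]

end Polynomial

theorem iteratedDeriv_pow_mul_one_sub_pow {𝕜 : Type*} [NontriviallyNormedField 𝕜] (p q : ℕ) :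
    iteratedDeriv (p + q) (fun x : 𝕜 => x ^ p * (1 - x) ^ q) =
      fun _ => ((p + q)! : 𝕜) * (-1) ^ q := by
  have hpoly : (fun x : 𝕜 => x ^ p * (1 - x) ^ q) =
      fun x => ((X : 𝕜[X]) ^ p * (1 - X) ^ q).eval x := by
    ext x
    simp
  rw [hpoly, iteratedDeriv_eval,
    iterate_derivative_of_natDegree_le (natDegree_X_pow_mul_one_sub_X_pow_le p q),
    coeff_X_pow_mul_one_sub_X_pow]
  simp only [eval_C]

theorem Leg_nil (z : ℂ) : Leg [] z = 1 := rfl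

theorem Leg_append_singleton (L : List (ℕ × ℕ)) (p q : ℕ) (z : ℂ) :
    Leg (L ++ [(p, q)]) z =
      z ^ q * (1 - z) ^ p *
        ((1 / ((p + q)! : ℂ)) *
          iteratedDeriv (p + q) (fun x => x ^ p * (1 - x) ^ q * Leg L x) z) := by
  rw [Leg, List.reverse_append]
  rfl

theorem Leg_singleton (p q : ℕ) (z : ℂ) : Leg [(p, q)] z = (-1) ^ q * z ^ q * (1 - z) ^ p := by
  rw [← List.nil_append [(p, q)], Leg_append_singleton]
  simp_rw [Leg_nil, mul_one]
  rw [iteratedDeriv_pow_mul_one_sub_pow]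
  have hfac : ((p + q)! : ℂ) ≠ 0 := Nat.cast_ne_zero.mpr (p + q).factorial_ne_zero
  field_simp

theorem Leg_two (p₁ q₁ p₂ q₂ : ℕ) (z : ℂ) :
    Leg [(p₁, q₁), (p₂, q₂)] z =
      (-1) ^ q₁ * z ^ q₂ * (1 - z) ^ p₂ *
        ((1 / ((p₂ + q₂)! : ℂ)) *
          iteratedDeriv (p₂ + q₂) (fun x : ℂ => x ^ (p₂ + q₁) * (1 - x) ^ (p₁ + q₂)) z) := by
  rw [← List.singleton_append, Leg_append_singleton]
  simp_rw [Leg_singleton]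
  have hinner : (fun x : ℂ => x ^ p₂ * (1 - x) ^ q₂ * ((-1) ^ q₁ * x ^ q₁ * (1 - x) ^ p₁)) =
      fun x => (-1) ^ q₁ * (x ^ (p₂ + q₁) * (1 - x) ^ (p₁ + q₂)) := by
    ext x
    ring
  rw [hinner, iteratedDeriv_const_mul_field]
  ring
end

section
/- Let P(z) ∈ ℂ[z], let w = z/(z-1), and let R(w) be the rational function with (1-z)P(z) = R(w). Then for all integers p, q ≥ 0: z^q (1-z)^{p+1} · (1/(p+q)!) d^{p+q}/dz^{p+q} [ z^p (1-z)^q P(z) ] = w^q · (1/(p+q)!) d^{p+q}/dw^{p+q} [ w^p R(w) ], where the right side is evaluated at w = z/(z-1). -/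
/-!
Write `z = v⁻¹ + 1` and `w = v + 1`, so that `(z - 1) (w - 1) = 1`. The identity is then a
translate of the classical formula `dⁿ/dvⁿ [vⁿ⁻¹ f(1/v)] = (-1)ⁿ v⁻ⁿ⁻¹ f⁽ⁿ⁾(1/v)`, proved by
induction on `n` from the Leibniz rule for the factor `v`. Apply it to `f(t) = φ(t + 1)` with
`φ(x) = xᵖ (1 - x)^q P(x)`: since `R(x + 1) = -x⁻¹ P(x⁻¹ + 1)`, the function `xⁿ⁻¹ f(1/x)` is
`(-1)^(q+1) (x + 1)ᵖ R(x + 1)`, whose `n`-th derivative at `v` is `(-1)^(q+1)` times that of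
`wᵖ R(w)` at `w`, while the formula expresses it through `φ⁽ⁿ⁾(z)`.
-/

open scoped Nat Topology

section IteratedDeriv

variable {𝕜 : Type*} [NontriviallyNormedField 𝕜]

theorem iteratedDeriv_succ_id_mul {G : 𝕜 → 𝕜} {u : 𝕜} {n : ℕ}
    (hG : ContDiffAt 𝕜 (n + 1 : ℕ) G u) :
    iteratedDeriv (n + 1) (fun x => x * G x) u =
      u * iteratedDeriv (n + 1) G u + (n + 1) * iteratedDeriv n G u := by
  rw [iteratedDeriv_fun_mul (f := fun x => x) contDiffAt_id hG]
  simp only [iteratedDeriv_fun_id, mul_ite, mul_one, mul_zero, ite_mul, zero_mul,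
    Finset.sum_range_succ', Nat.add_eq_zero_iff, one_ne_zero, and_false, ↓reduceIte,
    Nat.add_eq_right, Nat.reduceSubDiff, Finset.sum_ite_eq', Finset.mem_range,
    lt_add_iff_pos_left, Order.lt_add_one_iff, zero_le, zero_add, Nat.choose_one_right,
    Nat.cast_add, Nat.cast_one, tsub_zero, Nat.choose_zero_right, one_mul]
  ring

variable [CompleteSpace 𝕜]

theorem hasDerivAt_inv_pow_mul_iteratedDeriv_comp_inv {f : 𝕜 → 𝕜} {u : 𝕜} (hu : u ≠ 0)
    (hf : AnalyticAt 𝕜 f u⁻¹) (n : ℕ) :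
    HasDerivAt (fun x => x⁻¹ ^ (n + 1) * iteratedDeriv n f x⁻¹)
      (-(u⁻¹ ^ (n + 2) * ((n + 1) * iteratedDeriv n f u⁻¹ + u⁻¹ * iteratedDeriv (n + 1) f u⁻¹)))
      u := by
  have hinv := hasDerivAt_inv hu
  have hD : HasDerivAt (iteratedDeriv n f) (iteratedDeriv (n + 1) f u⁻¹) u⁻¹ := by
    rw [iteratedDeriv_succ]
    exact ((iteratedDeriv_eq_iterate (f := f) ▸ hf.iterated_deriv n).differentiableAt).hasDerivAt
  refine ((hinv.fun_pow (n + 1)).fun_mul (hD.comp u hinv)).congr_deriv ?_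
  rw [← inv_pow, Function.comp_apply, add_tsub_cancel_right]
  push_cast
  ring

/-- `x ^ n * x⁻¹` stands for `x ^ (n - 1)`, which truncated subtraction would spoil at `n = 0`. -/
theorem iteratedDeriv_pow_mul_comp_inv {f : 𝕜 → 𝕜} {u : 𝕜} (hu : u ≠ 0)
    (hf : AnalyticAt 𝕜 f u⁻¹) (n : ℕ) :
    iteratedDeriv n (fun x => x ^ n * (x⁻¹ * f x⁻¹)) u =
      (-1) ^ n * u⁻¹ ^ (n + 1) * iteratedDeriv n f u⁻¹ := by
  induction n generalizing u with
  | zero => simp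
  | succ n ih =>
    set G : 𝕜 → 𝕜 := fun x => x ^ n * (x⁻¹ * f x⁻¹)
    have hG : AnalyticAt 𝕜 G u := by fun_prop (disch := assumption)
    have hGn : iteratedDeriv n G =ᶠ[𝓝 u]
        fun x => (-1) ^ n * (x⁻¹ ^ (n + 1) * iteratedDeriv n f x⁻¹) := by
      filter_upwards [eventually_ne_nhds hu,
        (tendsto_inv₀ hu).eventually hf.eventually_analyticAt] with x hx hfx
      rw [ih hx hfx, mul_assoc]
    have hGsucc := hGn.deriv_eq.trans
      ((hasDerivAt_inv_pow_mul_iteratedDeriv_comp_inv hu hf n).const_mul ((-1) ^ n)).deriv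
    rw [← iteratedDeriv_succ] at hGsucc
    have hmul : (fun x => x ^ (n + 1) * (x⁻¹ * f x⁻¹)) = fun x => x * G x := by
      funext x; ring
    rw [hmul, iteratedDeriv_succ_id_mul hG.contDiffAt, hGsucc, ih hu hf]
    linear_combination (-(-1) ^ n * u⁻¹ ^ (n + 1) *
      ((n + 1) * iteratedDeriv n f u⁻¹ + u⁻¹ * iteratedDeriv (n + 1) f u⁻¹)) * mul_inv_cancel₀ hu

end IteratedDeriv

section Involution

theorem apply_add_one_of_one_sub_mul_one_sub_eq_one {K : Type*} [Field K] {P R : K → K}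
    (hR : ∀ z w : K, (1 - z) * (1 - w) = 1 → (1 - z) * P z = R w) {t : K} (ht : t ≠ 0) :
    R (t + 1) = -(t⁻¹ * P (t⁻¹ + 1)) := by
  rw [← hR (t⁻¹ + 1) (t + 1) (by field_simp; ring)]
  ring

theorem pow_mul_inv_mul_comp_inv_add_one_eq {K : Type*} [Field K] {P R : K → K}
    (hR : ∀ z w : K, (1 - z) * (1 - w) = 1 → (1 - z) * P z = R w) (p q : ℕ) {x : K}
    (hx : x ≠ 0) :
    x ^ (p + q) * (x⁻¹ * ((x⁻¹ + 1) ^ p * (1 - (x⁻¹ + 1)) ^ q * P (x⁻¹ + 1))) =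
      (-1) ^ (q + 1) * ((x + 1) ^ p * R (x + 1)) := by
  rw [apply_add_one_of_one_sub_mul_one_sub_eq_one hR hx]
  generalize P (x⁻¹ + 1) = c
  field_simp
  simp only [div_pow]
  field_simp
  ring

theorem pow_mul_one_sub_pow_mul_iteratedDeriv_eq {𝕜 : Type*} [NontriviallyNormedField 𝕜]
    [CompleteSpace 𝕜] {P R : 𝕜 → 𝕜}
    (hR : ∀ z w : 𝕜, (1 - z) * (1 - w) = 1 → (1 - z) * P z = R w) (p q : ℕ) {z w : 𝕜}
    (hzw : (1 - z) * (1 - w) = 1) (hP : AnalyticAt 𝕜 P z) :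
    z ^ q * (1 - z) ^ (p + 1) * iteratedDeriv (p + q) (fun x => x ^ p * (1 - x) ^ q * P x) z =
      w ^ q * iteratedDeriv (p + q) (fun x => x ^ p * R x) w := by
  obtain ⟨v, rfl⟩ : ∃ v, w = v + 1 := ⟨w - 1, by ring⟩
  have hv : v ≠ 0 := by rintro rfl; simp at hzw
  obtain rfl : z = v⁻¹ + 1 := by
    field_simp
    linear_combination hzw
  have hφ : AnalyticAt 𝕜 (fun x => (x + 1) ^ p * (1 - (x + 1)) ^ q * P (x + 1)) v⁻¹ := by
    fun_prop
  have key := iteratedDeriv_pow_mul_comp_inv hv hφ (p + q)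
  have hlhs : (fun x => x ^ (p + q) *
      (x⁻¹ * ((x⁻¹ + 1) ^ p * (1 - (x⁻¹ + 1)) ^ q * P (x⁻¹ + 1)))) =ᶠ[𝓝 v]
      fun x => (-1) ^ (q + 1) * ((x + 1) ^ p * R (x + 1)) := by
    filter_upwards [eventually_ne_nhds hv] with x hx
    exact pow_mul_inv_mul_comp_inv_add_one_eq hR p q hx
  rw [hlhs.iteratedDeriv_eq, iteratedDeriv_const_mul_field,
    congrFun (iteratedDeriv_comp_add_const _ (fun x => x ^ p * (1 - x) ^ q * P x) 1),
    congrFun (iteratedDeriv_comp_add_const _ (fun x => x ^ p * R x) 1)] at key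
  set A := iteratedDeriv (p + q) (fun x => x ^ p * (1 - x) ^ q * P x) (v⁻¹ + 1)
  set B := iteratedDeriv (p + q) (fun x => x ^ p * R x) (v + 1)
  have hB : B = (-1) ^ (p + 1) * v⁻¹ ^ (p + q + 1) * A :=
    mul_left_cancel₀ (pow_ne_zero (q + 1) (neg_ne_zero.2 one_ne_zero)) (key.trans (by ring))
  rw [hB]
  field_simp
  simp only [div_pow]
  field_simp
  ring

end Involution

theorem derivative_identity_z_w (P : Polynomial ℂ) (R : ℂ → ℂ)
    (hR : ∀ z w : ℂ, (1 - z) * (1 - w) = 1 → (1 - z) * P.eval z = R w)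
    (p q : ℕ) (z w : ℂ) (hzw : (1 - z) * (1 - w) = 1) :
    z ^ q * (1 - z) ^ (p + 1) *
        ((1 / ((p + q)! : ℂ)) *
          iteratedDeriv (p + q) (fun x : ℂ => x ^ p * (1 - x) ^ q * P.eval x) z) =
      w ^ q * ((1 / ((p + q)! : ℂ)) * iteratedDeriv (p + q) (fun x : ℂ => x ^ p * R x) w) := by
  have h := pow_mul_one_sub_pow_mul_iteratedDeriv_eq hR p q hzw
    (AnalyticOnNhd.eval_polynomial P z (Set.mem_univ z))
  linear_combination (1 / ((p + q)! : ℂ)) * h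
end

section
/- Let P(z) ∈ ℂ[z] and Q(k) ∈ ℂ[k] with (1-z)P(z) = Σ_{k≥0} Q(k) w^k for (1-z)(1-w)=1, |w|<1. Then for integers p, q ≥ 0: z^q (1-z)^{p+1} · (1/(p+q)!) d^{p+q}/dz^{p+q} [ z^p (1-z)^q P(z) ] = Σ_{k=0}^∞ C(k+p, p+q) Q(k) w^k. -/
/-!
Put `G(w) = ∑ Q(k) wᵏ = (1 - z) P(z)` on the unit disc. By termwise differentiation, multiplying
the coefficients by `C(k+p, p+q)` amounts to applying `w^q D_{p+q} w^p` to `G`. For `z = w/(w-1)`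
one has `w^p G(w) = (-1)^p (1-w)^(m-1) f(z)`, with `m = p+q` and `f = z^p (1-z)^q P`, and the
identity `(d/dw)^m [(1-w)^(m-1) f(z)] = (-1)^m (1-z)^(m+1) f^(m)(z)`, proved by induction on `m`
for all polynomials `f` at once, turns this into the left-hand side.
-/

open scoped Nat ENNReal
open Filter Topology Polynomial

theorem HasSum.of_nat_add {M : Type*} [AddCommGroup M] [TopologicalSpace M]
    [IsTopologicalAddGroup M] {f : ℕ → M} {g : M} {k : ℕ} (h : HasSum (fun n => f (n + k)) g)
    (hf : ∀ i < k, f i = 0) : HasSum f g := by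
  rwa [hasSum_nat_add_iff, Finset.sum_eq_zero fun i hi => hf i (Finset.mem_range.mp hi),
    add_zero] at h

section PowerSeries

variable {𝕜 : Type*} [RCLike 𝕜] {a : ℕ → 𝕜} {F : 𝕜 → 𝕜} {r : ℝ≥0∞}

theorem hasFPowerSeriesOnBall_ofScalars_of_hasSum (hr : 0 < r)
    (hF : ∀ y ∈ Metric.eball (0 : 𝕜) r, HasSum (fun n => a n * y ^ n) (F y)) :
    HasFPowerSeriesOnBall F (FormalMultilinearSeries.ofScalars 𝕜 a) 0 r where
  r_le := by
    refine ENNReal.le_of_forall_nnreal_lt fun ρ hρ => ?_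
    have hρ' : ((ρ : ℝ) : 𝕜) ∈ Metric.eball (0 : 𝕜) r := by simpa [enorm] using hρ
    refine FormalMultilinearSeries.le_radius_of_tendsto _ (l := 0) ?_
    simpa [FormalMultilinearSeries.ofScalars_norm] using
      (hF _ hρ').summable.tendsto_atTop_zero.norm
  r_pos := hr
  hasSum {y} hy := by
    simpa [FormalMultilinearSeries.ofScalars_apply_eq, mul_comm] using hF y hy

theorem hasSum_deriv_of_hasSum
    (hF : ∀ y ∈ Metric.eball (0 : 𝕜) r, HasSum (fun n => a n * y ^ n) (F y))
    {y : 𝕜} (hy : y ∈ Metric.eball (0 : 𝕜) r) :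
    HasSum (fun n => (n + 1) * a (n + 1) * y ^ n) (deriv F y) := by
  have hF' := (hasFPowerSeriesOnBall_ofScalars_of_hasSum (pos_of_gt hy) hF).fderiv
  have := (hF'.hasSum hy).mapL (ContinuousLinearMap.apply 𝕜 𝕜 1)
  simp only [zero_add, ContinuousLinearMap.apply_apply, fderiv_apply_one_eq_deriv,
    FormalMultilinearSeries.apply_eq_pow_smul_coeff] at this
  refine this.congr_fun fun n => ?_
  simp only [smul_apply, FormalMultilinearSeries.derivSeries_coeff_one,
    FormalMultilinearSeries.coeff_ofScalars, nsmul_eq_mul, Nat.cast_add, Nat.cast_one, smul_eq_mul]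
  ring

theorem hasSum_iteratedDeriv_of_hasSum
    (hF : ∀ y ∈ Metric.eball (0 : 𝕜) r, HasSum (fun n => a n * y ^ n) (F y)) (n : ℕ)
    {y : 𝕜} (hy : y ∈ Metric.eball (0 : 𝕜) r) :
    HasSum (fun k => ((k + n).descFactorial n : 𝕜) * a (k + n) * y ^ k)
      (iteratedDeriv n F y) := by
  induction n generalizing y with
  | zero => simpa using hF y hy
  | succ n ih =>
    rw [iteratedDeriv_succ]
    refine (hasSum_deriv_of_hasSum (fun y hy => ih hy) hy).congr_fun fun k => ?_
    rw [show k + (n + 1) = k + 1 + n by ring, Nat.descFactorial_succ, Nat.add_sub_cancel]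
    push_cast
    ring

theorem hasSum_pow_mul_of_hasSum {b : ℕ → 𝕜} {y g : 𝕜}
    (hb : HasSum (fun k => b k * y ^ k) g) (p : ℕ) :
    HasSum (fun j => (if p ≤ j then b (j - p) else 0) * y ^ j) (y ^ p * g) := by
  refine HasSum.of_nat_add (k := p) ((hb.mul_left (y ^ p)).congr_fun fun k => ?_) fun i hi => ?_
  · simp only [le_add_iff_nonneg_left, zero_le, if_true, Nat.add_sub_cancel, pow_add]
    ring
  · simp [Nat.not_le.mpr hi]

theorem hasSum_choose_mul_of_hasSum {b : ℕ → 𝕜} {G : 𝕜 → 𝕜}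
    (hG : ∀ y ∈ Metric.eball (0 : 𝕜) r, HasSum (fun k => b k * y ^ k) (G y)) (p q : ℕ)
    {w : 𝕜} (hw : w ∈ Metric.eball (0 : 𝕜) r) :
    HasSum (fun k => ((k + p).choose (p + q) : 𝕜) * b k * w ^ k)
      (w ^ q * ((1 / ((p + q)! : 𝕜)) * iteratedDeriv (p + q) (fun y => y ^ p * G y) w)) := by
  have hD := (hasSum_iteratedDeriv_of_hasSum (fun y hy => hasSum_pow_mul_of_hasSum (hG y hy) p)
    (p + q) hw).mul_left (w ^ q * (1 / ((p + q)! : 𝕜)))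
  rw [← mul_assoc]
  refine HasSum.of_nat_add (k := q) (hD.congr_fun fun k => ?_) fun i hi => ?_
  · rw [if_pos (by omega), show k + (p + q) - p = k + q by omega,
      show k + q + p = k + (p + q) by omega, Nat.descFactorial_eq_factorial_mul_choose, pow_add]
    have : ((p + q)! : 𝕜) ≠ 0 := Nat.cast_ne_zero.mpr (Nat.factorial_ne_zero _)
    push_cast
    field_simp
  · simp [Nat.choose_eq_zero_of_lt (show i + p < p + q by omega)]

end PowerSeries

theorem Polynomial.iterate_derivative_one_sub_X_mul_derivative {R : Type*} [CommRing R]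
    (h : R[X]) (m : ℕ) :
    derivative^[m] ((1 - X) * derivative h) =
      (1 - X) * derivative^[m + 1] h - m • derivative^[m] h := by
  induction m generalizing h with
  | zero => simp
  | succ m ih =>
    have hD : derivative ((1 - X) * derivative h) =
        (1 - X) * derivative (derivative h) - derivative h := by
      simp only [derivative_mul, derivative_sub, derivative_one, derivative_X, zero_sub, neg_mul,
        one_mul]
      ring
    rw [Function.iterate_succ_apply, hD, iterate_derivative_sub, ih,
      ← Function.iterate_succ_apply, ← Function.iterate_succ_apply, succ_nsmul]
    abel

theorem Polynomial.iteratedDeriv_eval_s11 {𝕜 : Type*} [NontriviallyNormedField 𝕜] (f : 𝕜[X])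
    (n : ℕ) : iteratedDeriv n (fun x => f.eval x) = fun x => (derivative^[n] f).eval x := by
  induction n with
  | zero => simp
  | succ n ih =>
    rw [iteratedDeriv_succ, ih]
    funext x
    rw [Function.iterate_succ_apply']
    exact Polynomial.deriv _

section EulerMap

variable {𝕜 : Type*} [NontriviallyNormedField 𝕜] {y : 𝕜}

/-- For `w ≠ 1`, `(1 - z) * (1 - w) = 1` means `z = eulerMap w`. -/
def eulerMap (y : 𝕜) : 𝕜 := y / (y - 1)

theorem one_sub_eulerMap (hy : y ≠ 1) : 1 - eulerMap y = (1 - y)⁻¹ := by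
  have : y - 1 ≠ 0 := sub_ne_zero.mpr hy
  have : 1 - y ≠ 0 := sub_ne_zero.mpr hy.symm
  rw [eulerMap]
  field_simp
  ring

theorem hasDerivAt_eulerMap (hy : y ≠ 1) : HasDerivAt eulerMap (-((1 - y) ^ 2)⁻¹) y := by
  have : y - 1 ≠ 0 := sub_ne_zero.mpr hy
  refine ((hasDerivAt_id' y).fun_div ((hasDerivAt_id' y).sub_const 1) this).congr_deriv ?_
  field_simp
  ring

theorem hasDerivAt_one_sub_zpow_mul_eval_eulerMap (h : 𝕜[X]) (s : ℤ) (hy : y ≠ 1) :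
    HasDerivAt (fun y => (1 - y) ^ s * h.eval (eulerMap y))
      ((1 - y) ^ (s - 1) * (-(s • h + (1 - X) * derivative h)).eval (eulerMap y)) y := by
  have hy' : 1 - y ≠ 0 := sub_ne_zero.mpr hy.symm
  have hpow : HasDerivAt (fun y : 𝕜 => (1 - y) ^ s) (s * (1 - y) ^ (s - 1) * -1) y :=
    (hasDerivAt_zpow s (1 - y) (Or.inl hy')).comp y ((hasDerivAt_id y).const_sub 1)
  have hh := (h.hasDerivAt (eulerMap y)).comp y (hasDerivAt_eulerMap hy)
  refine (hpow.mul hh).congr_deriv ?_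
  simp only [eval_neg, eval_add, eval_mul, eval_sub, eval_one, eval_X, zsmul_eq_mul,
    eval_intCast, one_sub_eulerMap hy, Function.comp_apply]
  rw [zpow_sub_one₀ hy']
  field_simp
  ring

theorem iteratedDeriv_one_sub_zpow_mul_eval_eulerMap (h : 𝕜[X]) (m : ℕ) (hy : y ≠ 1) :
    iteratedDeriv m (fun y => (1 - y) ^ ((m : ℤ) - 1) * h.eval (eulerMap y)) y =
      (-1) ^ m * (1 - eulerMap y) ^ (m + 1) * (derivative^[m] h).eval (eulerMap y) := by
  induction m generalizing h y with
  | zero => simp [one_sub_eulerMap hy]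
  | succ m ih =>
    have hderiv : deriv (fun y => (1 - y) ^ (((m + 1 : ℕ) : ℤ) - 1) * h.eval (eulerMap y))
        =ᶠ[𝓝 y] fun y => (1 - y) ^ ((m : ℤ) - 1) *
          (-((m : ℤ) • h + (1 - X) * derivative h)).eval (eulerMap y) := by
      filter_upwards [isOpen_ne.mem_nhds hy] with y' hy'
      push_cast
      simpa only [add_sub_cancel_right] using
        (hasDerivAt_one_sub_zpow_mul_eval_eulerMap h m hy').deriv
    rw [iteratedDeriv_succ', hderiv.iteratedDeriv_eq, ih _ hy, iterate_derivative_neg,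
      iterate_map_add, iterate_derivative_smul, iterate_derivative_one_sub_X_mul_derivative,
      natCast_zsmul, add_sub_cancel]
    simp only [eval_neg, eval_mul, eval_sub, eval_one, eval_X]
    ring

theorem pow_mul_one_sub_eulerMap_mul_eval (P : 𝕜[X]) (p q : ℕ) (hy : y ≠ 1) :
    y ^ p * ((1 - eulerMap y) * P.eval (eulerMap y)) =
      (-1) ^ p * ((1 - y) ^ (((p + q : ℕ) : ℤ) - 1) *
        (X ^ p * (1 - X) ^ q * P).eval (eulerMap y)) := by
  have hy' : 1 - y ≠ 0 := sub_ne_zero.mpr hy.symm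
  have hφ : eulerMap y = -y * (1 - y)⁻¹ := by
    rw [eulerMap, ← neg_sub, div_neg, div_eq_mul_inv, neg_mul]
  simp only [eval_mul, eval_pow, eval_sub, eval_one, eval_X, one_sub_eulerMap hy,
    zpow_sub_one₀ hy', zpow_natCast]
  generalize P.eval (eulerMap y) = c
  rw [hφ, neg_mul, neg_pow (y * _), mul_pow, inv_pow, inv_pow, pow_add]
  field_simp
  rw [← pow_mul, pow_mul', neg_one_sq, one_pow, mul_one]

theorem pow_mul_iteratedDeriv_eulerMap_eq (P : 𝕜[X]) (p q : ℕ) {w : 𝕜} (hw : w ≠ 1) :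
    w ^ q * iteratedDeriv (p + q) (fun y => y ^ p * ((1 - eulerMap y) * P.eval (eulerMap y))) w =
      eulerMap w ^ q * (1 - eulerMap w) ^ (p + 1) *
        iteratedDeriv (p + q) (fun x => x ^ p * (1 - x) ^ q * P.eval x) (eulerMap w) := by
  have hloc : (fun y => y ^ p * ((1 - eulerMap y) * P.eval (eulerMap y))) =ᶠ[𝓝 w]
      fun y => (-1) ^ p * ((1 - y) ^ (((p + q : ℕ) : ℤ) - 1) *
        (X ^ p * (1 - X) ^ q * P).eval (eulerMap y)) := by
    filter_upwards [isOpen_ne.mem_nhds hw] with y hy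
    exact pow_mul_one_sub_eulerMap_mul_eval P p q hy
  have hpoly : (fun x : 𝕜 => x ^ p * (1 - x) ^ q * P.eval x) =
      fun x => (X ^ p * (1 - X) ^ q * P).eval x := by
    funext x
    simp
  rw [hloc.iteratedDeriv_eq, iteratedDeriv_const_mul_field,
    iteratedDeriv_one_sub_zpow_mul_eval_eulerMap _ _ hw, hpoly, Polynomial.iteratedDeriv_eval_s11]
  have hwz : w * (1 - eulerMap w) = -eulerMap w := by
    rw [one_sub_eulerMap hw, eulerMap]
    field_simp
    ring
  generalize eulerMap w = z at hwz ⊢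
  have hwq : w ^ q * (1 - z) ^ q = (-1) ^ q * z ^ q := by rw [← mul_pow, hwz, neg_pow]
  have hsign : ((-1 : 𝕜) ^ p * (-1) ^ (p + q) * (-1) ^ q) = 1 := by
    rw [← pow_add, ← pow_add, show p + (p + q) + q = 2 * (p + q) by ring, pow_mul]
    norm_num
  beta_reduce
  generalize eval z (derivative^[p + q] (X ^ p * (1 - X) ^ q * P)) = c
  linear_combination (c * (1 - z) ^ (p + 1) * (-1) ^ p * (-1) ^ (p + q)) * hwq
    + c * (1 - z) ^ (p + 1) * z ^ q * hsign

end EulerMap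

theorem derivative_binomial_series (P : Polynomial ℂ) (Q : Polynomial ℂ)
    (hPQ : ∀ z w : ℂ, (1 - z) * (1 - w) = 1 → ‖w‖ < 1 →
      HasSum (fun k : ℕ => Q.eval (k : ℂ) * w ^ k) ((1 - z) * P.eval z))
    (p q : ℕ) (z w : ℂ) (hzw : (1 - z) * (1 - w) = 1) (hw : ‖w‖ < 1) :
    HasSum (fun k : ℕ => ((k + p).choose (p + q) : ℂ) * Q.eval (k : ℂ) * w ^ k)
      (z ^ q * (1 - z) ^ (p + 1) *
        ((1 / ((p + q)! : ℂ)) *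
          iteratedDeriv (p + q) (fun x : ℂ => x ^ p * (1 - x) ^ q * P.eval x) z)) := by
  have mem_eball {y : ℂ} : y ∈ Metric.eball (0 : ℂ) 1 ↔ ‖y‖ < 1 := by
    simp [enorm, ← NNReal.coe_lt_coe]
  have ne_one {y : ℂ} (hy : ‖y‖ < 1) : y ≠ 1 := by
    rintro rfl
    simp at hy
  have hG (y : ℂ) (hy : y ∈ Metric.eball (0 : ℂ) 1) :
      HasSum (fun k : ℕ => Q.eval (k : ℂ) * y ^ k) ((1 - eulerMap y) * P.eval (eulerMap y)) := by
    refine hPQ _ _ ?_ (mem_eball.mp hy)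
    have hy1 := ne_one (mem_eball.mp hy)
    rw [one_sub_eulerMap hy1, inv_mul_cancel₀ (sub_ne_zero.mpr hy1.symm)]
  have hz : z = eulerMap w := by
    have := eq_inv_of_mul_eq_one_left hzw
    rw [← one_sub_eulerMap (ne_one hw)] at this
    exact sub_right_injective this
  have hS := hasSum_choose_mul_of_hasSum hG p q (mem_eball.mpr hw)
  rwa [mul_left_comm (w ^ q), pow_mul_iteratedDeriv_eulerMap_eq P p q (ne_one hw), ← hz,
    mul_left_comm] at hS
end

section
/- Let L_n be the multiple Legendre polynomials and S_n the Sorokin-type rational functions (both as defined recursively above). Then for all z ≠ 1 and w = z/(z-1) with |w| < 1: (1-z) · L_n(p_1,q_1;…;p_n,q_n;z) = S_n(p_1,q_1;…;p_n,q_n;w). -/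
/-!
The map `x ↦ x / (x - 1)` is an involution exchanging `z` and `w`, with `(1 - z) (1 - w) = 1`.
Under it, `m`-th derivatives transform by
`D^m [(1 - x)^(m - 1) f (x / (x - 1))] = (-1)^m (1 - x)^(-m - 1) f^(m) (x / (x - 1))`,
which follows by induction on `m` from the chain rule. By induction on the list of index pairs,
`w^p S_{n-1}(w) = (-1)^p (1 - w)^(p + q - 1) F(z)` with `F(z) = z^p (1 - z)^q L_{n-1}(z)`, and the
transformation law turns `w^q D_{p+q}` of the left side into `(1 - z) L_n(z)`.
-/

open scoped Nat

/-- Auxiliary recursion for Sorokin-type rational functions, peeling the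
outermost (i.e. last) index pair from the head of the list. -/
noncomputable def SorAux : List (ℕ × ℕ) → ℂ → ℂ
  | [], w => 1 / (1 - w)
  | (p, q) :: rest, w =>
      w ^ q * ((1 / ((p + q)! : ℂ)) *
        iteratedDeriv (p + q) (fun x : ℂ => x ^ p * SorAux rest x) w)

/-- The Sorokin-type rational function `S_n(p_1,q_1;…;p_n,q_n;w)`:
`S_0(w) = 1/(1-w)` and `S_n = w^{q_n} D_{p_n+q_n}(w^{p_n} S_{n-1})`. -/
noncomputable def Sor (L : List (ℕ × ℕ)) (w : ℂ) : ℂ := SorAux L.reverse w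

open scoped ContDiff Topology

section Involution

variable {K : Type*} [Field K] {x : K}

theorem one_sub_div_sub_one (hx : x ≠ 1) : 1 - x / (x - 1) = (1 - x)⁻¹ := by
  have : x - 1 ≠ 0 := sub_ne_zero.2 hx
  have : 1 - x ≠ 0 := sub_ne_zero.2 hx.symm
  field_simp
  ring

theorem div_sub_one_ne_one (x : K) : x / (x - 1) ≠ 1 := by
  rcases eq_or_ne x 1 with rfl | hx
  · simp
  · rw [Ne, div_eq_one_iff_eq (sub_ne_zero.2 hx)]
    intro h
    simpa using congrArg (x - ·) h

theorem div_sub_one_div_sub_one (hx : x ≠ 1) : x / (x - 1) / (x / (x - 1) - 1) = x := by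
  have : x - 1 ≠ 0 := sub_ne_zero.2 hx
  field_simp
  ring

theorem pow_eq_neg_one_pow_mul_div_sub_one_pow_mul (hx : x ≠ 1) (n : ℕ) :
    x ^ n = (-1) ^ n * ((x / (x - 1)) ^ n * (1 - x) ^ n) := by
  have : x - 1 ≠ 0 := sub_ne_zero.2 hx
  rw [← mul_pow, ← mul_pow]
  congr 1
  field_simp
  ring

theorem pow_mul_one_sub_div_sub_one_mul (hx : x ≠ 1) (p q : ℕ) (a : K) :
    x ^ p * ((1 - x / (x - 1)) * a)
      = (-1) ^ p * ((1 - x) ^ (p + q) / (1 - x) *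
          ((x / (x - 1)) ^ p * (1 - x / (x - 1)) ^ q * a)) := by
  have hu : 1 - x ≠ 0 := sub_ne_zero.2 hx.symm
  rw [pow_eq_neg_one_pow_mul_div_sub_one_pow_mul hx, one_sub_div_sub_one hx, inv_pow]
  generalize x / (x - 1) = v
  field_simp
  ring

end Involution

section Calculus

variable {𝕜 : Type*} [NontriviallyNormedField 𝕜] {f : 𝕜 → 𝕜}

theorem iteratedDeriv_one_sub_mul_deriv (hf : ContDiff 𝕜 ∞ f) (n : ℕ) (x : 𝕜) :
    iteratedDeriv n (fun y => (1 - y) * deriv f y) x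
      = (1 - x) * iteratedDeriv (n + 1) f x - n * iteratedDeriv n f x := by
  induction n generalizing f with
  | zero => simp
  | succ n ih =>
    obtain ⟨-, hf'⟩ := contDiff_infty_iff_deriv.1 hf
    have hderiv : deriv (fun y => (1 - y) * deriv f y)
        = fun y => (1 - y) * deriv (deriv f) y - deriv f y := by
      funext y
      have : HasDerivAt (fun y => (1 - y) * deriv f y) _ y :=
        ((hasDerivAt_id' y).const_sub 1).fun_mul (hf'.differentiable (by simp) y).hasDerivAt
      rw [this.deriv]
      ring
    have hsmooth : ContDiff 𝕜 ∞ (fun y => (1 - y) * deriv (deriv f) y) :=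
      (contDiff_const.sub contDiff_id).mul (contDiff_infty_iff_deriv.1 hf').2
    rw [iteratedDeriv_succ', hderiv,
      iteratedDeriv_fun_sub (hsmooth.contDiffAt.of_le (mod_cast le_top))
        (hf'.contDiffAt.of_le (mod_cast le_top)),
      ih hf', ← iteratedDeriv_succ', ← iteratedDeriv_succ']
    push_cast
    ring

theorem iteratedDeriv_smul_add_one_sub_mul_deriv (hf : ContDiff 𝕜 ∞ f) (n : ℕ) (x : 𝕜) :
    iteratedDeriv n (fun y => n * f y + (1 - y) * deriv f y) x
      = (1 - x) * iteratedDeriv (n + 1) f x := by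
  have hf' : ContDiff 𝕜 ∞ (fun y => (1 - y) * deriv f y) :=
    (contDiff_const.sub contDiff_id).mul (contDiff_infty_iff_deriv.1 hf).2
  rw [iteratedDeriv_fun_add ((contDiff_const.mul hf).contDiffAt.of_le (mod_cast le_top))
      (hf'.contDiffAt.of_le (mod_cast le_top)),
    iteratedDeriv_const_mul_field, iteratedDeriv_one_sub_mul_deriv hf]
  ring

theorem hasDerivAt_div_sub_one {x : 𝕜} (hx : x ≠ 1) :
    HasDerivAt (fun y => y / (y - 1)) (-(1 - x / (x - 1)) ^ 2) x := by
  have hx' : x - 1 ≠ 0 := sub_ne_zero.2 hx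
  have : HasDerivAt (fun y => y / (y - 1)) _ x :=
    (hasDerivAt_id' x).div ((hasDerivAt_id' x).sub_const 1) hx'
  convert this using 1
  rw [one_sub_div_sub_one hx]
  field_simp
  ring

theorem deriv_one_sub_pow_mul_comp_div_sub_one (hf : Differentiable 𝕜 f) (m : ℕ) {x : 𝕜}
    (hx : x ≠ 1) :
    deriv (fun y => (1 - y) ^ m * f (y / (y - 1))) x
      = -((1 - x) ^ m / (1 - x) *
          (m * f (x / (x - 1)) + (1 - x / (x - 1)) * deriv f (x / (x - 1)))) := by
  have hu : 1 - x ≠ 0 := sub_ne_zero.2 hx.symm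
  have : HasDerivAt (fun y => (1 - y) ^ m * f (y / (y - 1))) _ x :=
    (((hasDerivAt_id' x).const_sub 1).fun_pow m).fun_mul
      ((hf _).hasDerivAt.comp x (hasDerivAt_div_sub_one hx))
  rw [this.deriv, one_sub_div_sub_one hx]
  rcases m with _ | m
  · simp
    field_simp
  · simp only [Nat.add_sub_cancel, pow_succ]
    field_simp
    ring

/-- `(1 - x) ^ m / (1 - x)` plays the role of `(1 - x) ^ (m - 1)`, also for `m = 0`. -/
theorem iteratedDeriv_one_sub_pow_div_mul_comp_div_sub_one (hf : ContDiff 𝕜 ∞ f) (m : ℕ)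
    {w : 𝕜} (hw : w ≠ 1) :
    iteratedDeriv m (fun x => (1 - x) ^ m / (1 - x) * f (x / (x - 1))) w
      = (-1) ^ m * iteratedDeriv m f (w / (w - 1)) / (1 - w) ^ (m + 1) := by
  induction m generalizing f with
  | zero => simp [div_eq_mul_inv, mul_comm]
  | succ m ih =>
    have hu : 1 - w ≠ 0 := sub_ne_zero.2 hw.symm
    have hG : ContDiff 𝕜 ∞ (fun u => m * f u + (1 - u) * deriv f u) :=
      (contDiff_const.mul hf).add
        ((contDiff_const.sub contDiff_id).mul (contDiff_infty_iff_deriv.1 hf).2)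
    have hcancel : (fun x => (1 - x) ^ (m + 1) / (1 - x) * f (x / (x - 1)))
        =ᶠ[𝓝 w] fun x => (1 - x) ^ m * f (x / (x - 1)) := by
      filter_upwards [eventually_ne_nhds hw] with x hx
      rw [pow_succ, mul_div_cancel_right₀ _ (sub_ne_zero.2 hx.symm)]
    have hderiv : deriv (fun x => (1 - x) ^ m * f (x / (x - 1)))
        =ᶠ[𝓝 w] fun x => -((1 - x) ^ m / (1 - x) *
          (m * f (x / (x - 1)) + (1 - x / (x - 1)) * deriv f (x / (x - 1)))) := by
      filter_upwards [eventually_ne_nhds hw] with x hx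
      exact deriv_one_sub_pow_mul_comp_div_sub_one (hf.differentiable (by simp)) m hx
    rw [hcancel.iteratedDeriv_eq, iteratedDeriv_succ', hderiv.iteratedDeriv_eq,
      iteratedDeriv_fun_neg, ih hG, iteratedDeriv_smul_add_one_sub_mul_deriv hf,
      one_sub_div_sub_one hw]
    field_simp
    ring

end Calculus

theorem contDiff_legAux (L : List (ℕ × ℕ)) : ContDiff ℂ ∞ (LegAux L) := by
  induction L with
  | nil => exact contDiff_const
  | cons pq rest ih =>
    obtain ⟨p, q⟩ := pq
    have hF : ContDiff ℂ ∞ (fun x : ℂ => x ^ p * (1 - x) ^ q * LegAux rest x) := by fun_prop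
    show ContDiff ℂ ∞ fun z => z ^ q * (1 - z) ^ p * ((1 / ((p + q)! : ℂ)) *
      iteratedDeriv (p + q) (fun x : ℂ => x ^ p * (1 - x) ^ q * LegAux rest x) z)
    rw [iteratedDeriv_eq_iterate]
    have := hF.iterate_deriv (p + q)
    fun_prop

theorem one_sub_mul_legAux_eq_sorAux (L : List (ℕ × ℕ)) {z : ℂ} (hz : z ≠ 1) :
    (1 - z) * LegAux L z = SorAux L (z / (z - 1)) := by
  induction L generalizing z with
  | nil => simp [LegAux, SorAux, one_sub_div_sub_one hz]
  | cons pq rest ih =>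
    obtain ⟨p, q⟩ := pq
    simp only [LegAux, SorAux]
    set F : ℂ → ℂ := fun x => x ^ p * (1 - x) ^ q * LegAux rest x
    have hF : ContDiff ℂ ∞ F := by
      have := contDiff_legAux rest
      fun_prop
    have hsor : (fun x => x ^ p * SorAux rest x)
        =ᶠ[𝓝 (z / (z - 1))]
          fun x => (-1) ^ p * ((1 - x) ^ (p + q) / (1 - x) * F (x / (x - 1))) := by
      filter_upwards [eventually_ne_nhds (div_sub_one_ne_one z)] with x hx
      have hrest := ih (div_sub_one_ne_one x)
      rw [div_sub_one_div_sub_one hx] at hrest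
      rw [← hrest]
      exact pow_mul_one_sub_div_sub_one_mul hx p q _
    have hsign : (-1 : ℂ) ^ p * (-1) ^ (p + q) = (-1) ^ q := by
      rw [← pow_add, ← add_assoc, ← two_mul, pow_add, pow_mul, neg_one_sq, one_pow, one_mul]
    have hu : 1 - z ≠ 0 := sub_ne_zero.2 hz.symm
    rw [hsor.iteratedDeriv_eq, iteratedDeriv_const_mul_field,
      iteratedDeriv_one_sub_pow_div_mul_comp_div_sub_one hF _ (div_sub_one_ne_one z),
      div_sub_one_div_sub_one hz, one_sub_div_sub_one hz, mul_div_assoc,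
      ← mul_assoc ((-1 : ℂ) ^ p), hsign, inv_pow,
      pow_eq_neg_one_pow_mul_div_sub_one_pow_mul hz q]
    generalize z / (z - 1) = v
    field_simp
    ring

theorem one_sub_mul_Leg_eq_Sor_general (L : List (ℕ × ℕ)) (z w : ℂ) (hz : z ≠ 1)
    (hw : w = z / (z - 1)) :
    (1 - z) * Leg L z = Sor L w := by
  rw [hw]
  exact one_sub_mul_legAux_eq_sorAux L.reverse hz

theorem one_sub_mul_Leg_eq_Sor (L : List (ℕ × ℕ)) (z w : ℂ) (hz : z ≠ 1)
    (hw : w = z / (z - 1)) (habs : ‖w‖ < 1) :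
    (1 - z) * Leg L z = Sor L w :=
  one_sub_mul_Leg_eq_Sor_general L z w hz hw
end

section
/- The multiple Legendre polynomial L_n(p_1,q_1;…;p_n,q_n;z), multiplied by (p_1+q_1)!⋯(p_n+q_n)!, is a bisymmetric function of (p_1,…,p_n) and (q_1,…,q_n): for any permutations σ, τ of {1,…,n}, (p_1+q_1)!⋯(p_n+q_n)! · L_n(p_1,q_1;…;p_n,q_n;z) = (p_{σ(1)}+q_{τ(1)})!⋯(p_{σ(n)}+q_{τ(n)})! · L_n(p_{σ(1)},q_{τ(1)};…;p_{σ(n)},q_{τ(n)};z). -/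
open scoped Nat

/-!
Encode a polynomial `Q` by the coefficients `c_k` of `(1 - z) Q(z) = ∑ c_k w^k`, `z = w / (w - 1)`.
Explicitly `c_k = ∑ⱼ (-1)^j C(k, j) Q_j`, so the `c_k` determine `Q`. In these coordinates
`θ = z D (1 - z)` multiplies `c_k` by `k`, and by Leibniz' rule the Rodrigues operator
`z^q (1-z)^p D^{p+q} z^p (1-z)^q` factors as `(θ + p) ⋯ (θ + 1) · (θ - q + 1) ⋯ θ`, so it
multiplies `c_k` by `(k + p)! / (k - q)!` (zero for `k < q`). Hence the coefficients of
`(p₁+q₁)! ⋯ (pₙ+qₙ)! Lₙ` are `∏ⱼ (k + pⱼ)! / (k - qⱼ)!`, separately symmetric in the `p`'s and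
the `q`'s.
-/

open Polynomial Finset

lemma Nat.mul_choose_add_succ_mul_choose_succ (k j : ℕ) :
    j * k.choose j + (j + 1) * k.choose (j + 1) = k * k.choose j := by
  rw [mul_comm (j + 1), Nat.choose_succ_right_eq]
  rcases le_or_gt j k with h | h
  · rw [mul_comm j, ← mul_add, Nat.add_sub_cancel' h, mul_comm]
  · simp [Nat.choose_eq_zero_of_lt h]

namespace MultipleLegendre

variable {R : Type*} [CommRing R]

lemma X_mul_derivative_X_pow (n : ℕ) : X * derivative (X ^ n : R[X]) = (n : R[X]) * X ^ n := by
  cases n with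
  | zero => simp
  | succ n => simp only [derivative_X_pow_succ, map_add, map_natCast, map_one, Nat.cast_succ]; ring

lemma one_sub_X_mul_derivative_one_sub_X_pow (n : ℕ) :
    (1 - X) * derivative ((1 - X) ^ n : R[X]) = -((n : R[X]) * (1 - X) ^ n) := by
  cases n with
  | zero => simp
  | succ n =>
    simp only [derivative_pow_succ, derivative_sub, derivative_one, derivative_X, map_add,
      map_natCast, map_one, Nat.cast_succ]
    ring

lemma cast_descFactorial_succ (k q : ℕ) :
    (k.descFactorial (q + 1) : R) = ((k : R) - q) * k.descFactorial q := by
  rcases le_or_gt q k with h | h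
  · rw [Nat.descFactorial_succ, Nat.cast_mul, Nat.cast_sub h]
  · simp [Nat.descFactorial_eq_zero_iff_lt.2 h]

noncomputable def binomialTransform (k : ℕ) : R[X] →ₗ[R] R :=
  ∑ j ∈ range (k + 1), ((-1) ^ j * k.choose j : R) • lcoeff R j

lemma binomialTransform_apply (k : ℕ) (Q : R[X]) :
    binomialTransform k Q = ∑ j ∈ range (k + 1), (-1) ^ j * k.choose j * Q.coeff j := by
  simp [binomialTransform]

lemma binomialTransform_C_mul_X_pow (k j : ℕ) (a : R) :
    binomialTransform k (C a * X ^ j) = (-1) ^ j * k.choose j * a := by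
  simp only [binomialTransform_apply, coeff_C_mul_X_pow, mul_ite, mul_zero, sum_ite_eq', mem_range]
  split_ifs with h
  · rfl
  · rw [Nat.choose_eq_zero_of_lt (by omega), Nat.cast_zero, mul_zero, zero_mul]

lemma eq_of_binomialTransform_eq {P Q : R[X]}
    (h : ∀ k, binomialTransform k P = binomialTransform k Q) : P = Q := by
  rw [← sub_eq_zero]
  ext j
  induction j using Nat.strong_induction_on with
  | _ j ih =>
    have hj := h j
    rw [← sub_eq_zero, ← map_sub, binomialTransform_apply, sum_range_succ,
      sum_eq_zero fun i hi => by rw [ih i (mem_range.1 hi), coeff_zero, mul_zero], zero_add,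
      Nat.choose_self, Nat.cast_one, mul_one] at hj
    simpa using ((isUnit_neg_one (α := R)).pow j).mul_right_eq_zero.1 hj

noncomputable def theta (Q : R[X]) : R[X] := X * derivative ((1 - X) * Q)

lemma theta_C_mul_X_pow (j : ℕ) (a : R) :
    theta (C a * X ^ j) = C (j * a) * X ^ j - C ((j + 1) * a) * X ^ (j + 1) := by
  have h₁ := X_mul_derivative_X_pow (R := R) j
  have h₂ := X_mul_derivative_X_pow (R := R) (j + 1)
  rw [theta, show (1 - X) * (C a * X ^ j) = C a * X ^ j - C a * X ^ (j + 1) by ring,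
    derivative_sub, derivative_C_mul, derivative_C_mul]
  simp only [map_mul, map_add, map_natCast, map_one]
  push_cast at h₂
  linear_combination C a * h₁ - C a * h₂

lemma binomialTransform_theta (k : ℕ) (Q : R[X]) :
    binomialTransform k (theta Q) = k * binomialTransform k Q := by
  induction Q using Polynomial.induction_on' with
  | add P Q hP hQ => rw [theta, mul_add, derivative_add, mul_add, map_add, ← theta, ← theta,
      map_add, hP, hQ, mul_add]
  | monomial j a =>
    have h := Nat.mul_choose_add_succ_mul_choose_succ k j
    rw [← C_mul_X_pow_eq_monomial, theta_C_mul_X_pow, map_sub, binomialTransform_C_mul_X_pow,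
      binomialTransform_C_mul_X_pow, binomialTransform_C_mul_X_pow]
    apply_fun ((↑) : ℕ → R) at h
    push_cast at h
    linear_combination (-1) ^ j * a * h

noncomputable def rodrigues (p q : ℕ) (Q : R[X]) : R[X] :=
  X ^ q * (1 - X) ^ p * derivative^[p + q] (X ^ p * (1 - X) ^ q * Q)

lemma rodrigues_succ_left (p q : ℕ) (Q : R[X]) :
    rodrigues (p + 1) q Q = theta (rodrigues p q Q) + ((p : R) + 1) • rodrigues p q Q := by
  set H := derivative^[p + q] (X ^ p * (1 - X) ^ q * Q)
  have hX := X_mul_derivative_X_pow (R := R) q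
  have hY := one_sub_X_mul_derivative_one_sub_X_pow (R := R) p
  have hD : derivative^[p + 1 + q] (X ^ (p + 1) * (1 - X) ^ q * Q)
      = derivative H * X + ((p + q + 1 : ℕ) : R[X]) * H := by
    rw [show X ^ (p + 1) * (1 - X) ^ q * Q = X ^ p * (1 - X) ^ q * Q * X by ring,
      show p + 1 + q = p + q + 1 by omega, iterate_derivative_mul_X, nsmul_eq_mul,
      Function.iterate_succ_apply', Nat.add_sub_cancel]
  rw [rodrigues, hD, theta, rodrigues, ← mul_assoc, derivative_mul, derivative_mul,
    derivative_mul, smul_eq_C_mul]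
  simp only [derivative_sub, derivative_one, derivative_X, map_add, map_natCast, map_one]
  push_cast
  linear_combination (-((1 - X) ^ (p + 1) * H)) * hX - X ^ (q + 1) * H * hY

lemma rodrigues_zero_succ (q : ℕ) (Q : R[X]) :
    rodrigues 0 (q + 1) Q = theta (rodrigues 0 q Q) - (q : R) • rodrigues 0 q Q := by
  set H := derivative^[q] ((1 - X) ^ q * Q)
  have hX := X_mul_derivative_X_pow (R := R) q
  have hD : derivative^[q + 1] ((1 - X) ^ (q + 1) * Q)
      = derivative H - derivative H * X - ((q + 1 : ℕ) : R[X]) * H := by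
    rw [show (1 - X) ^ (q + 1) * Q = (1 - X) ^ q * Q - (1 - X) ^ q * Q * X by ring,
      iterate_derivative_sub, iterate_derivative_mul_X, nsmul_eq_mul,
      Function.iterate_succ_apply', Nat.add_sub_cancel]
    ring
  simp only [rodrigues, pow_zero, one_mul, mul_one, zero_add] at hD ⊢
  rw [hD, theta, ← mul_assoc, derivative_mul, derivative_mul, smul_eq_C_mul]
  simp only [derivative_sub, derivative_one, derivative_X, map_natCast]
  push_cast
  linear_combination -((1 - X) * H * hX)

lemma binomialTransform_rodrigues_zero_left (q : ℕ) (Q : R[X]) (k : ℕ) :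
    binomialTransform k (rodrigues 0 q Q) = k.descFactorial q * binomialTransform k Q := by
  induction q with
  | zero => simp [rodrigues]
  | succ q ih =>
    rw [rodrigues_zero_succ, map_sub, map_smul, binomialTransform_theta, ih, smul_eq_mul,
      cast_descFactorial_succ]
    ring

lemma binomialTransform_rodrigues (p q : ℕ) (Q : R[X]) (k : ℕ) :
    binomialTransform k (rodrigues p q Q)
      = (k + p).descFactorial p * k.descFactorial q * binomialTransform k Q := by
  induction p with
  | zero => simp [binomialTransform_rodrigues_zero_left]
  | succ p ih =>
    rw [rodrigues_succ_left, map_add, map_smul, binomialTransform_theta, ih, smul_eq_mul,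
      ← add_assoc, Nat.succ_descFactorial_succ]
    push_cast
    ring

noncomputable def rodriguesChain : List (ℕ × ℕ) → R[X]
  | [] => 1
  | (p, q) :: L => rodrigues p q (rodriguesChain L)

lemma binomialTransform_rodriguesChain (L : List (ℕ × ℕ)) (k : ℕ) :
    binomialTransform k (rodriguesChain L : R[X])
      = (L.map fun pq => ((k + pq.1).descFactorial pq.1 * k.descFactorial pq.2 : R)).prod := by
  induction L with
  | nil => simpa [rodriguesChain] using binomialTransform_C_mul_X_pow (R := R) k 0 1
  | cons pq L ih =>
    rw [rodriguesChain, binomialTransform_rodrigues, ih, List.map_cons, List.prod_cons]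

theorem rodriguesChain_eq_of_perm {L₁ L₂ : List (ℕ × ℕ)}
    (hp : (L₁.map Prod.fst).Perm (L₂.map Prod.fst))
    (hq : (L₁.map Prod.snd).Perm (L₂.map Prod.snd)) :
    (rodriguesChain L₁ : R[X]) = rodriguesChain L₂ := by
  refine eq_of_binomialTransform_eq fun k => ?_
  have hsplit : ∀ L : List (ℕ × ℕ), binomialTransform k (rodriguesChain L : R[X])
      = ((L.map Prod.fst).map fun p => ((k + p).descFactorial p : R)).prod
        * ((L.map Prod.snd).map fun q => (k.descFactorial q : R)).prod := by
    intro L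
    simp only [binomialTransform_rodriguesChain, List.prod_map_mul, List.map_map]
    rfl
  rw [hsplit, hsplit, (hp.map _).prod_eq, (hq.map _).prod_eq]

end MultipleLegendre

open MultipleLegendre

lemma iteratedDeriv_polynomial_eval {𝕜 : Type*} [NontriviallyNormedField 𝕜] (n : ℕ) (P : 𝕜[X]) :
    iteratedDeriv n (fun x => P.eval x) = fun x => (derivative^[n] P).eval x := by
  induction n generalizing P with
  | zero => simp
  | succ n ih =>
    have hP : deriv (fun x => P.eval x) = fun x => (derivative P).eval x :=
      funext fun _ => Polynomial.deriv P
    rw [iteratedDeriv_succ', hP, ih, Function.iterate_succ_apply]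

lemma legAux_eq_eval (L : List (ℕ × ℕ)) (z : ℂ) :
    LegAux L z =
      (C ((L.map fun pq : ℕ × ℕ => ((pq.1 + pq.2)! : ℂ)).prod)⁻¹ * rodriguesChain L).eval z := by
  induction L generalizing z with
  | nil => simp [LegAux, rodriguesChain]
  | cons pq L ih =>
    obtain ⟨p, q⟩ := pq
    set c := (L.map fun pq => ((pq.1 + pq.2)! : ℂ)).prod
    have hf : (fun x => x ^ p * (1 - x) ^ q * LegAux L x)
        = fun x => (C c⁻¹ * (X ^ p * (1 - X) ^ q * rodriguesChain L)).eval x := by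
      funext x
      simp only [ih, eval_mul, eval_C, eval_pow, eval_sub, eval_one, eval_X]
      ring
    rw [LegAux, hf, iteratedDeriv_polynomial_eval, iterate_derivative_C_mul]
    simp only [rodriguesChain, rodrigues, List.map_cons, List.prod_cons, mul_inv, eval_mul, eval_C,
      eval_pow, eval_sub, eval_one, eval_X]
    ring

lemma prod_factorial_mul_leg (L : List (ℕ × ℕ)) (z : ℂ) :
    (L.map fun pq => ((pq.1 + pq.2)! : ℂ)).prod * Leg L z = (rodriguesChain L.reverse).eval z := by
  have hc : (L.map fun pq => ((pq.1 + pq.2)! : ℂ)).prod ≠ 0 :=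
    List.prod_ne_zero (by simp [Nat.factorial_ne_zero])
  rw [Leg, legAux_eq_eval, List.map_reverse, List.prod_reverse, eval_mul, eval_C, ← mul_assoc,
    mul_inv_cancel₀ hc, one_mul]

/-- Bisymmetry of the normalized multiple Legendre polynomials: if the multiset of the
`p_j`'s and the multiset of the `q_j`'s of `L₂` are obtained from those of `L₁` by
(independent) permutations, then the normalized polynomials agree. -/
theorem Leg_bisymmetric (L₁ L₂ : List (ℕ × ℕ))
    (hp : (L₁.map Prod.fst).Perm (L₂.map Prod.fst))
    (hq : (L₁.map Prod.snd).Perm (L₂.map Prod.snd)) (z : ℂ) :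
    (L₁.map fun pq => ((pq.1 + pq.2)! : ℂ)).prod * Leg L₁ z =
      (L₂.map fun pq => ((pq.1 + pq.2)! : ℂ)).prod * Leg L₂ z := by
  have reverse_perm {f : ℕ × ℕ → ℕ} (h : (L₁.map f).Perm (L₂.map f)) :
      (L₁.reverse.map f).Perm (L₂.reverse.map f) := by
    rw [List.map_reverse, List.map_reverse]
    exact (List.reverse_perm _).trans (h.trans (List.reverse_perm _).symm)
  rw [prod_factorial_mul_leg, prod_factorial_mul_leg,
    rodriguesChain_eq_of_perm (reverse_perm hp) (reverse_perm hq)]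
end

section
/- For nonnegative integers p_1, q_1, p_2, q_2, the identity (p_1+q_1)!(p_2+q_2)! L_2(p_1,q_1;p_2,q_2;z) = (p_1+q_2)!(p_2+q_1)! L_2(p_1,q_2;p_2,q_1;z) holds, where L_2(p_1,q_1;p_2,q_2;z) = (-1)^{q_1} z^{q_2}(1-z)^{p_2} · (1/(p_2+q_2)!) d^{p_2+q_2}/dz^{p_2+q_2} [ z^{p_2+q_1}(1-z)^{p_1+q_2} ]. -/
open scoped Nat
open Finset

/-!
Expand the derivative by the Leibniz rule, letting `k` count the derivatives falling on the power
of `x`. After multiplying by `(p₁ + q₁)!` and the prefactor, the `k`-th term is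
`(-z) ^ (p₂ + q₁ + q₂ - k) * (1 - z) ^ (p₁ + k)` times
`(p₁ + q₁)! (p₁ + q₂)! (p₂ + q₁)! (p₂ + q₂)! / (k! (p₂ + q₁ - k)! (p₂ + q₂ - k)! (p₁ + k - p₂)!)`
(read as 0 when some factorial argument is negative), which is symmetric in `q₁` and `q₂`.
-/

theorem Nat.choose_mul_descFactorial_comm (n m k : ℕ) :
    n.choose k * m.descFactorial k = m.choose k * n.descFactorial k := by
  rw [descFactorial_eq_factorial_mul_choose, descFactorial_eq_factorial_mul_choose]
  ring

theorem Nat.factorial_mul_descFactorial_sub_comm {a b c : ℕ} (ha : c ≤ a) (hb : c ≤ b) :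
    a ! * b.descFactorial (b - c) = b ! * a.descFactorial (a - c) := by
  apply Nat.eq_of_mul_eq_mul_left (factorial_pos c)
  have hb' := factorial_mul_descFactorial (Nat.sub_le b c)
  have ha' := factorial_mul_descFactorial (Nat.sub_le a c)
  rw [Nat.sub_sub_self hb] at hb'
  rw [Nat.sub_sub_self ha] at ha'
  calc c ! * (a ! * b.descFactorial (b - c)) = a ! * (c ! * b.descFactorial (b - c)) := by ring
    _ = b ! * (c ! * a.descFactorial (a - c)) := by rw [hb', ha', mul_comm]
    _ = _ := by ring

theorem iteratedDeriv_pow_mul_one_sub_pow_s15 {𝕜 : Type*} [NontriviallyNormedField 𝕜]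
    (a b n : ℕ) (z : 𝕜) :
    iteratedDeriv n (fun x => x ^ a * (1 - x) ^ b) z =
      ∑ k ∈ range (n + 1), ((n.choose k * a.descFactorial k * b.descFactorial (n - k) : ℕ) : 𝕜) *
        (-1) ^ (n - k) * z ^ (a - k) * (1 - z) ^ (b - (n - k)) := by
  rw [iteratedDeriv_fun_mul (by fun_prop) (by fun_prop)]
  refine sum_congr rfl fun k _ => ?_
  rw [iteratedDeriv_comp_const_sub (f := fun x => x ^ b)]
  simp only [iteratedDeriv_pow, smul_eq_mul]
  push_cast
  ring

def doubleLegendreCoeff (p₁ q₁ p₂ q₂ k : ℕ) : ℕ :=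
  (p₂ + q₂).choose k * (p₂ + q₁).descFactorial k * (p₁ + q₂).descFactorial (p₂ + q₂ - k)

theorem doubleLegendreCoeff_eq_zero {p₁ q₁ p₂ q₂ k : ℕ}
    (hk : ¬(k ≤ p₂ + q₁ ∧ k ≤ p₂ + q₂ ∧ p₂ ≤ p₁ + k)) : doubleLegendreCoeff p₁ q₁ p₂ q₂ k = 0 := by
  simp only [doubleLegendreCoeff, mul_eq_zero, Nat.choose_eq_zero_iff,
    Nat.descFactorial_eq_zero_iff_lt]
  omega

theorem factorial_mul_doubleLegendreCoeff_comm (p₁ q₁ p₂ q₂ k : ℕ) :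
    (p₁ + q₁)! * doubleLegendreCoeff p₁ q₁ p₂ q₂ k =
      (p₁ + q₂)! * doubleLegendreCoeff p₁ q₂ p₂ q₁ k := by
  by_cases hk : k ≤ p₂ + q₁ ∧ k ≤ p₂ + q₂ ∧ p₂ ≤ p₁ + k
  · have e₁ : p₂ + q₁ - k = p₁ + q₁ - (p₁ + k - p₂) := by omega
    have e₂ : p₂ + q₂ - k = p₁ + q₂ - (p₁ + k - p₂) := by omega
    rw [doubleLegendreCoeff, doubleLegendreCoeff, e₁, e₂]
    calc _ = (p₁ + q₁)! * (p₁ + q₂).descFactorial (p₁ + q₂ - (p₁ + k - p₂)) *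
            ((p₂ + q₂).choose k * (p₂ + q₁).descFactorial k) := by ring
      _ = (p₁ + q₂)! * (p₁ + q₁).descFactorial (p₁ + q₁ - (p₁ + k - p₂)) *
            ((p₂ + q₁).choose k * (p₂ + q₂).descFactorial k) := by
          rw [Nat.factorial_mul_descFactorial_sub_comm (by omega) (by omega),
            Nat.choose_mul_descFactorial_comm]
      _ = _ := by ring
  · rw [doubleLegendreCoeff_eq_zero hk, doubleLegendreCoeff_eq_zero (by omega), mul_zero, mul_zero]

theorem factorial_mul_doubleLegendre_eq_sum {𝕜 : Type*} [NontriviallyNormedField 𝕜]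
    (p₁ q₁ p₂ q₂ : ℕ) (z : 𝕜) :
    ((p₁ + q₁)! : 𝕜) * ((-1) ^ q₁ * z ^ q₂ * (1 - z) ^ p₂ *
        iteratedDeriv (p₂ + q₂) (fun x : 𝕜 => x ^ (p₂ + q₁) * (1 - x) ^ (p₁ + q₂)) z) =
      ∑ k ∈ range (p₂ + q₁ + q₂ + 1), (((p₁ + q₁)! * doubleLegendreCoeff p₁ q₁ p₂ q₂ k : ℕ) : 𝕜) *
        (-1) ^ (p₂ + q₁ + q₂ - k) * z ^ (p₂ + q₁ + q₂ - k) * (1 - z) ^ (p₁ + k) := by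
  rw [iteratedDeriv_pow_mul_one_sub_pow_s15, mul_sum, mul_sum,
    ← eventually_constant_sum (N := p₂ + q₂ + 1) (n := p₂ + q₁ + q₂ + 1) _ (by omega)]
  · refine sum_congr rfl fun k _ => ?_
    by_cases hk : k ≤ p₂ + q₁ ∧ k ≤ p₂ + q₂ ∧ p₂ ≤ p₁ + k
    · have hsign : ((-1 : 𝕜)) ^ (p₂ + q₁ + q₂ - k) = (-1) ^ q₁ * (-1) ^ (p₂ + q₂ - k) := by
        rw [← pow_add]; congr 1; omega
      have hz : z ^ (p₂ + q₁ + q₂ - k) = z ^ q₂ * z ^ (p₂ + q₁ - k) := by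
        rw [← pow_add]; congr 1; omega
      have h1z : (1 - z) ^ (p₁ + k) = (1 - z) ^ p₂ * (1 - z) ^ (p₁ + q₂ - (p₂ + q₂ - k)) := by
        rw [← pow_add]; congr 1; omega
      rw [hsign, hz, h1z, doubleLegendreCoeff]
      push_cast
      ring
    · have h := doubleLegendreCoeff_eq_zero hk
      rw [doubleLegendreCoeff] at h ⊢
      simp only [h, Nat.cast_zero, mul_zero, zero_mul]
  · intro k hk
    simp [Nat.choose_eq_zero_of_lt (show p₂ + q₂ < k by omega)]

theorem Hata_Legendre_identity (p₁ q₁ p₂ q₂ : ℕ) (z : ℂ) :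
    ((p₁ + q₁)! : ℂ) * ((p₂ + q₂)! : ℂ) *
        ((-1) ^ q₁ * z ^ q₂ * (1 - z) ^ p₂ *
          ((1 / ((p₂ + q₂)! : ℂ)) *
            iteratedDeriv (p₂ + q₂) (fun x : ℂ => x ^ (p₂ + q₁) * (1 - x) ^ (p₁ + q₂)) z)) =
      ((p₁ + q₂)! : ℂ) * ((p₂ + q₁)! : ℂ) *
        ((-1) ^ q₂ * z ^ q₁ * (1 - z) ^ p₂ *
          ((1 / ((p₂ + q₁)! : ℂ)) *
            iteratedDeriv (p₂ + q₁) (fun x : ℂ => x ^ (p₂ + q₂) * (1 - x) ^ (p₁ + q₁)) z)) := by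
  have cancel (m : ℕ) (A B S : ℂ) : A * m ! * (B * (1 / m ! * S)) = A * (B * S) := by
    rw [mul_assoc A, mul_left_comm (m ! : ℂ), one_div, mul_inv_cancel_left₀ (mod_cast m.factorial_ne_zero)]
  rw [cancel, cancel, factorial_mul_doubleLegendre_eq_sum, factorial_mul_doubleLegendre_eq_sum,
    add_right_comm p₂ q₂ q₁]
  refine sum_congr rfl fun k _ => ?_
  rw [factorial_mul_doubleLegendreCoeff_comm]
end

section
/- For nonnegative integers p_1,q_1,…,p_n,q_n and all z ∈ [0,1]: z^{-q_1}(1-z)^{-p_1} |L_n(p_1,q_1;…;p_n,q_n;z)| ≤ M! / ((p_1+q_1)!⋯(p_n+q_n)!), where M = Σ_{l=1}^n (p_l+q_l). (Equivalently, |L_n(p_1,q_1;…;p_n,q_n;z)| ≤ z^{q_1}(1-z)^{p_1} M!/((p_1+q_1)!⋯(p_n+q_n)!) for z ∈ [0,1].) -/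
open scoped Nat

/-! The proof writes `L_n` as a linear combination of the functions `z ^ i * (1 - z) ^ j`, all with
`i + j = M`, and tracks the sum of the norms of the coefficients (the *mass*). Differentiating a
combination that is homogeneous of degree `n` multiplies its mass by exactly `n`, so the step with
index pair `(p, q)` multiplies the mass by `(n + p + q).choose (p + q)`; the product of these
binomials is `M! / ∏ (p_l + q_l)!`. The exponents never drop below `q₁` and `p₁`, those created
by the innermost step, so on `[0, 1]` every basis function is at most `z ^ q₁ * (1 - z) ^ p₁`. -/

namespace MultipleLegendre

structure Term where
  coeff : ℂ
  i : ℕ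
  j : ℕ

namespace Term

def eval (t : Term) (z : ℂ) : ℂ := t.coeff * z ^ t.i * (1 - z) ^ t.j

/-- The summands of the product rule with a factor `i = 0` or `j = 0` are left out: with the
truncated `i - 1`, `j - 1` they would break homogeneity. -/
def derivative (t : Term) : List Term :=
  (if t.i = 0 then [] else [⟨t.i * t.coeff, t.i - 1, t.j⟩]) ++
    (if t.j = 0 then [] else [⟨-t.j * t.coeff, t.i, t.j - 1⟩])

end Term

def evalTerms (l : List Term) (z : ℂ) : ℂ := (l.map (·.eval z)).sum

noncomputable def mass (l : List Term) : ℝ := (l.map (‖·.coeff‖)).sum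

def derivative (l : List Term) : List Term := l.flatMap Term.derivative

def mulMonomial (c : ℂ) (a b : ℕ) (l : List Term) : List Term :=
  l.map fun t => ⟨c * t.coeff, t.i + a, t.j + b⟩

def IsHomogeneous (n : ℕ) (l : List Term) : Prop := ∀ t ∈ l, t.i + t.j = n

def HasOrders (a b : ℕ) (l : List Term) : Prop := ∀ t ∈ l, a ≤ t.i ∧ b ≤ t.j

@[simp]
lemma evalTerms_nil (z : ℂ) : evalTerms [] z = 0 := rfl

@[simp]
lemma evalTerms_cons (t : Term) (l : List Term) (z : ℂ) :
    evalTerms (t :: l) z = t.eval z + evalTerms l z := by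
  simp [evalTerms]

@[simp]
lemma evalTerms_append (l₁ l₂ : List Term) (z : ℂ) :
    evalTerms (l₁ ++ l₂) z = evalTerms l₁ z + evalTerms l₂ z := by
  simp [evalTerms]

@[simp]
lemma mass_nil : mass [] = 0 := rfl

@[simp]
lemma mass_cons (t : Term) (l : List Term) : mass (t :: l) = ‖t.coeff‖ + mass l := by
  simp [mass]

@[simp]
lemma mass_append (l₁ l₂ : List Term) : mass (l₁ ++ l₂) = mass l₁ + mass l₂ := by
  simp [mass]

lemma derivative_cons (t : Term) (l : List Term) :
    derivative (t :: l) = t.derivative ++ derivative l := by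
  simp [derivative]

lemma Term.hasDerivAt_eval (t : Term) (z : ℂ) :
    HasDerivAt t.eval (evalTerms t.derivative z) z := by
  have h := ((hasDerivAt_pow t.i z).mul
    (((hasDerivAt_id z).const_sub 1).pow t.j)).const_mul t.coeff
  have he : t.eval = fun y => t.coeff * (y ^ t.i * (1 - id y) ^ t.j) :=
    funext fun y => by simp [eval, mul_assoc]
  rw [he]
  refine h.congr_deriv ?_
  obtain ⟨c, i, j⟩ := t
  simp only [derivative]
  split_ifs <;> simp_all [eval] <;> ring

lemma hasDerivAt_evalTerms (l : List Term) (z : ℂ) :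
    HasDerivAt (evalTerms l) (evalTerms (derivative l) z) z := by
  induction l with
  | nil => exact hasDerivAt_const z 0
  | cons t l ih =>
    rw [derivative_cons, evalTerms_append]
    exact (t.hasDerivAt_eval z).add ih

lemma iteratedDeriv_evalTerms (k : ℕ) (l : List Term) :
    iteratedDeriv k (evalTerms l) = evalTerms (derivative^[k] l) := by
  induction k with
  | zero => rfl
  | succ k ih =>
    rw [iteratedDeriv_succ, ih, Function.iterate_succ_apply']
    exact funext fun z => (hasDerivAt_evalTerms _ z).deriv

lemma Term.mass_derivative (t : Term) : mass t.derivative = (t.i + t.j) * ‖t.coeff‖ := by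
  simp only [derivative]
  split_ifs <;> simp_all [mass, add_mul]

lemma Term.exponents_of_mem_derivative {t s : Term} (hs : s ∈ t.derivative) :
    s.i + s.j + 1 = t.i + t.j ∧ t.i ≤ s.i + 1 ∧ t.j ≤ s.j + 1 := by
  obtain ⟨c, i, j⟩ := t
  simp only [derivative] at hs
  split_ifs at hs <;>
    simp only [List.append_nil, List.nil_append, List.cons_append, List.mem_cons,
      List.not_mem_nil, or_false] at hs <;>
    obtain rfl | rfl := hs <;> dsimp only <;> omega

lemma mass_derivative {n : ℕ} {l : List Term} (h : IsHomogeneous n l) :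
    mass (derivative l) = n * mass l := by
  induction l with
  | nil => simp [derivative]
  | cons t l ih =>
    have ht : (t.i : ℝ) + t.j = n := by exact_mod_cast h t (by simp)
    rw [derivative_cons, mass_append, t.mass_derivative, ih fun s hs => h s (by simp [hs]),
      mass_cons, ht]
    ring

lemma isHomogeneous_derivative {n : ℕ} {l : List Term} (h : IsHomogeneous (n + 1) l) :
    IsHomogeneous n (derivative l) := by
  intro s hs
  obtain ⟨t, ht, hs⟩ := List.mem_flatMap.mp hs
  have := h t ht
  have := Term.exponents_of_mem_derivative hs
  omega

lemma hasOrders_derivative {a b : ℕ} {l : List Term} (h : HasOrders a b l) :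
    HasOrders (a - 1) (b - 1) (derivative l) := by
  intro s hs
  obtain ⟨t, ht, hs⟩ := List.mem_flatMap.mp hs
  have := h t ht
  have := Term.exponents_of_mem_derivative hs
  omega

lemma isHomogeneous_iterate_derivative {n k : ℕ} {l : List Term}
    (h : IsHomogeneous (n + k) l) : IsHomogeneous n (derivative^[k] l) := by
  induction k generalizing n with
  | zero => exact h
  | succ k ih =>
    rw [Function.iterate_succ_apply']
    exact isHomogeneous_derivative (ih (by rwa [Nat.add_right_comm, add_assoc]))

lemma hasOrders_iterate_derivative {a b : ℕ} {l : List Term} (h : HasOrders a b l) (k : ℕ) :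
    HasOrders (a - k) (b - k) (derivative^[k] l) := by
  induction k with
  | zero => exact h
  | succ k ih =>
    rw [Function.iterate_succ_apply']
    exact hasOrders_derivative ih

lemma mass_iterate_derivative {n k : ℕ} {l : List Term} (h : IsHomogeneous (n + k) l) :
    mass (derivative^[k] l) = (n + k).descFactorial k * mass l := by
  induction k generalizing n with
  | zero => simp
  | succ k ih =>
    have h' : IsHomogeneous (n + 1 + k) l := by rwa [Nat.add_right_comm, add_assoc]
    rw [Function.iterate_succ_apply', mass_derivative (isHomogeneous_iterate_derivative h'),
      ih h', Nat.descFactorial_succ, show n + (k + 1) = n + 1 + k by omega, Nat.add_sub_cancel]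
    push_cast
    ring

lemma evalTerms_mulMonomial (c : ℂ) (a b : ℕ) (l : List Term) (z : ℂ) :
    evalTerms (mulMonomial c a b l) z = c * z ^ a * (1 - z) ^ b * evalTerms l z := by
  induction l with
  | nil => simp [mulMonomial]
  | cons t l ih =>
    simp only [mulMonomial, List.map_cons, evalTerms_cons] at ih ⊢
    rw [ih]
    simp only [Term.eval, pow_add]
    ring

lemma mass_mulMonomial (c : ℂ) (a b : ℕ) (l : List Term) :
    mass (mulMonomial c a b l) = ‖c‖ * mass l := by
  induction l with
  | nil => simp [mulMonomial]
  | cons t l ih =>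
    simp only [mulMonomial, List.map_cons, mass_cons, norm_mul] at ih ⊢
    rw [ih, mul_add]

lemma isHomogeneous_mulMonomial {n : ℕ} {l : List Term} (h : IsHomogeneous n l) (c : ℂ)
    (a b : ℕ) : IsHomogeneous (n + (a + b)) (mulMonomial c a b l) := by
  simp only [mulMonomial, IsHomogeneous, List.forall_mem_map]
  intro t ht
  have := h t ht
  omega

lemma hasOrders_mulMonomial {a' b' : ℕ} {l : List Term} (h : HasOrders a' b' l) (c : ℂ)
    (a b : ℕ) : HasOrders (a' + a) (b' + b) (mulMonomial c a b l) := by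
  simp only [mulMonomial, HasOrders, List.forall_mem_map]
  intro t ht
  have := h t ht
  omega

lemma HasOrders.mono {a b a' b' : ℕ} {l : List Term} (h : HasOrders a b l) (ha : a' ≤ a)
    (hb : b' ≤ b) : HasOrders a' b' l :=
  fun t ht => ⟨ha.trans (h t ht).1, hb.trans (h t ht).2⟩

noncomputable def stepTerms (p q : ℕ) (l : List Term) : List Term :=
  mulMonomial (1 / ((p + q)! : ℂ)) q p (derivative^[p + q] (mulMonomial 1 p q l))

lemma evalTerms_stepTerms (p q : ℕ) (l : List Term) (z : ℂ) :
    evalTerms (stepTerms p q l) z = z ^ q * (1 - z) ^ p * ((1 / ((p + q)! : ℂ)) *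
      iteratedDeriv (p + q) (fun x : ℂ => x ^ p * (1 - x) ^ q * evalTerms l x) z) := by
  have hinner : (fun x : ℂ => x ^ p * (1 - x) ^ q * evalTerms l x) =
      evalTerms (mulMonomial 1 p q l) :=
    funext fun x => by rw [evalTerms_mulMonomial, one_mul]
  rw [stepTerms, evalTerms_mulMonomial, hinner, iteratedDeriv_evalTerms]
  ring

lemma isHomogeneous_stepTerms {n : ℕ} {l : List Term} (h : IsHomogeneous n l) (p q : ℕ) :
    IsHomogeneous (n + (p + q)) (stepTerms p q l) := by
  have := isHomogeneous_mulMonomial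
    (isHomogeneous_iterate_derivative (isHomogeneous_mulMonomial h 1 p q)) (1 / ((p + q)! : ℂ)) q p
  rwa [add_comm q p] at this

lemma hasOrders_stepTerms {a b : ℕ} {l : List Term} (h : HasOrders a b l) (p q : ℕ) :
    HasOrders (max a q) (max b p) (stepTerms p q l) :=
  (hasOrders_mulMonomial (hasOrders_iterate_derivative (hasOrders_mulMonomial h 1 p q) (p + q))
    _ q p).mono (by omega) (by omega)

lemma mass_stepTerms {n : ℕ} {l : List Term} (h : IsHomogeneous n l) (p q : ℕ) :
    mass (stepTerms p q l) = (n + (p + q)).choose (p + q) * mass l := by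
  rw [stepTerms, mass_mulMonomial, mass_iterate_derivative (isHomogeneous_mulMonomial h 1 p q),
    mass_mulMonomial, Nat.descFactorial_eq_factorial_mul_choose]
  have : ((p + q)! : ℝ) ≠ 0 := by positivity
  simp only [norm_div, norm_one, Complex.norm_natCast, Nat.cast_mul]
  field_simp

noncomputable def legTerms : List (ℕ × ℕ) → List Term
  | [] => [⟨1, 0, 0⟩]
  | (p, q) :: L => stepTerms p q (legTerms L)

lemma legAux_eq_evalTerms (L : List (ℕ × ℕ)) : LegAux L = evalTerms (legTerms L) := by
  induction L with
  | nil => funext z; simp [LegAux, legTerms, Term.eval]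
  | cons pq L ih =>
    funext z
    rw [LegAux, legTerms, evalTerms_stepTerms, ih]

lemma isHomogeneous_legTerms (L : List (ℕ × ℕ)) :
    IsHomogeneous (L.map fun pq => pq.1 + pq.2).sum (legTerms L) := by
  induction L with
  | nil => simp [IsHomogeneous, legTerms]
  | cons pq L ih =>
    rw [legTerms, List.map_cons, List.sum_cons, add_comm]
    exact isHomogeneous_stepTerms ih _ _

lemma mass_legTerms (L : List (ℕ × ℕ)) :
    mass (legTerms L) =
      ((L.map fun pq => pq.1 + pq.2).sum)! / (L.map fun pq => ((pq.1 + pq.2)! : ℝ)).prod := by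
  induction L with
  | nil => simp [legTerms]
  | cons pq L ih =>
    obtain ⟨p, q⟩ := pq
    have hprod : (L.map fun pq => ((pq.1 + pq.2)! : ℝ)).prod ≠ 0 := by
      simp [List.prod_eq_zero_iff, Nat.factorial_ne_zero]
    rw [legTerms, mass_stepTerms (isHomogeneous_legTerms L), ih, List.map_cons, List.sum_cons,
      List.map_cons, List.prod_cons, add_comm (p + q),
      ← Nat.add_choose_mul_factorial_mul_factorial _ (p + q)]
    push_cast
    field_simp

lemma hasOrders_legTerms_append (L : List (ℕ × ℕ)) (p q : ℕ) :
    HasOrders q p (legTerms (L ++ [(p, q)])) := by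
  induction L with
  | nil =>
    have h : HasOrders 0 0 [⟨1, 0, 0⟩] := by simp [HasOrders]
    simpa [legTerms] using hasOrders_stepTerms h p q
  | cons pq L ih => exact (hasOrders_stepTerms ih _ _).mono (le_max_left _ _) (le_max_left _ _)

lemma Term.norm_eval_le {a b : ℕ} {t : Term} (ha : a ≤ t.i) (hb : b ≤ t.j) {z : ℝ}
    (hz : z ∈ Set.Icc (0 : ℝ) 1) : ‖t.eval z‖ ≤ ‖t.coeff‖ * (z ^ a * (1 - z) ^ b) := by
  obtain ⟨hz₀, hz₁⟩ := hz
  have hw₀ : 0 ≤ 1 - z := by linarith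
  have hw : ‖(1 - z : ℂ)‖ = 1 - z := by
    rw [← Complex.ofReal_one, ← Complex.ofReal_sub, Complex.norm_real, Real.norm_of_nonneg hw₀]
  rw [eval, norm_mul, norm_mul, norm_pow, norm_pow, hw, Complex.norm_real, Real.norm_of_nonneg hz₀,
    mul_assoc]
  refine mul_le_mul_of_nonneg_left (mul_le_mul ?_ ?_ (pow_nonneg hw₀ _) (pow_nonneg hz₀ _))
    (norm_nonneg _)
  · exact pow_le_pow_of_le_one hz₀ hz₁ ha
  · exact pow_le_pow_of_le_one hw₀ (by linarith) hb

lemma norm_evalTerms_le {a b : ℕ} {l : List Term} (h : HasOrders a b l) {z : ℝ}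
    (hz : z ∈ Set.Icc (0 : ℝ) 1) : ‖evalTerms l z‖ ≤ mass l * (z ^ a * (1 - z) ^ b) := by
  induction l with
  | nil => simp
  | cons t l ih =>
    rw [evalTerms_cons, mass_cons, add_mul]
    exact (norm_add_le _ _).trans <| add_le_add
      (t.norm_eval_le (h t (by simp)).1 (h t (by simp)).2 hz) (ih fun s hs => h s (by simp [hs]))

end MultipleLegendre

open MultipleLegendre in
theorem Leg_bound_unit_interval (p₁ q₁ : ℕ) (rest : List (ℕ × ℕ)) (z : ℝ)
    (hz : z ∈ Set.Icc (0 : ℝ) 1) :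
    ‖Leg ((p₁, q₁) :: rest) (z : ℂ)‖ ≤
      z ^ q₁ * (1 - z) ^ p₁ *
        ((((p₁, q₁) :: rest).map fun pq => pq.1 + pq.2).sum ! /
          ((((p₁, q₁) :: rest).map fun pq => ((pq.1 + pq.2)! : ℝ)).prod)) := by
  have hbound := norm_evalTerms_le (hasOrders_legTerms_append rest.reverse p₁ q₁) hz
  rw [← List.reverse_cons, ← legAux_eq_evalTerms, mass_legTerms, List.map_reverse,
    List.sum_reverse, List.map_reverse, List.prod_reverse] at hbound
  rw [Leg, mul_comm]
  exact hbound
end
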